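/- arXiv:2110.11319 — 10 statements merged into one kernel-verified Lean document; each statement's English description precedes it below -/
import Mathlib

section
/- Let t+1 = p^α be a prime power. Then for any integer a ≥ 0, the binomial coefficient C(a, t) is divisible by p if and only if a is not congruent to −1 modulo t+1. -/
lemma key_aux (p : ℕ) (hp : p.Prime) (a : ℕ) :
    p ∣ Nat.choose (a % p) (p - 1) ↔ a % p ≠ p - 1 := by
  have hlt : a % p < p := Nat.mod_lt _ hp.pos
  rcases lt_trichotomy (a % p) (p - 1) with h | h | h
  · simp [Nat.choose_eq_zero_of_lt h, ne_of_lt h]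
  · simp [h, Nat.choose_self, Nat.dvd_one, hp.one_lt.ne']
  · omega

lemma key (p : ℕ) (hp : p.Prime) : ∀ α a : ℕ,
    p ∣ Nat.choose a (p ^ α - 1) ↔ a % p ^ α ≠ p ^ α - 1 := by
  haveI : Fact p.Prime := ⟨hp⟩
  intro α
  induction α with
  | zero => intro a; simp [hp.one_lt.ne', Nat.mod_one]
  | succ α ih =>
    intro a
    have hppos := hp.pos
    have hpos : 0 < p ^ α := Nat.pow_pos (n := α) hp.pos
    have hpow : p ^ (α + 1) = p * p ^ α := by ring
    have ht : p ^ (α + 1) - 1 = p * (p ^ α - 1) + (p - 1) := by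
      have h3 : p * (p ^ α - 1) + p = p * p ^ α := by
        rw [← Nat.mul_succ]; congr 1; omega
      omega
    have htm : (p ^ (α + 1) - 1) % p = p - 1 := by
      rw [ht, Nat.mul_add_mod, Nat.mod_eq_of_lt (by omega)]
    have htd : (p ^ (α + 1) - 1) / p = p ^ α - 1 := by
      rw [ht, Nat.mul_add_div hp.pos, Nat.div_eq_of_lt (by omega), Nat.add_zero]
    have lucas := @Choose.choose_modEq_choose_mod_mul_choose_div_nat a (p ^ (α + 1) - 1) p _
    rw [htm, htd] at lucas
    have hdvd : p ∣ Nat.choose a (p ^ (α + 1) - 1) ↔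
        p ∣ Nat.choose (a % p) (p - 1) * Nat.choose (a / p) (p ^ α - 1) :=
      (Nat.modEq_zero_iff_dvd).symm.trans
        (Iff.trans ⟨lucas.symm.trans, lucas.trans⟩ Nat.modEq_zero_iff_dvd)
    rw [hdvd, hp.dvd_mul, key_aux p hp, ih (a / p)]
    have h1' : a % p ^ (α + 1) % p = a % p := by
      rw [Nat.mod_mod_of_dvd _ (dvd_pow_self p (Nat.succ_ne_zero α))]
    have h2' : a % p ^ (α + 1) / p = a / p % p ^ α := by
      rw [hpow, Nat.mod_mul_right_div_self]
    have hmod : a % p ^ (α + 1) = p ^ (α + 1) - 1 ↔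
        (a % p = p - 1 ∧ (a / p) % p ^ α = p ^ α - 1) := by
      constructor
      · intro h
        exact ⟨by rw [← h1', h, htm], by rw [← h2', h, htd]⟩
      · rintro ⟨h1, h2⟩
        have hdm := Nat.div_add_mod (a % p ^ (α + 1)) p
        rw [h2', h1', h1, h2] at hdm
        exact (ht.trans hdm).symm
    simp only [ne_eq, hmod]
    tauto

theorem stmt2 (p α t : ℕ) (hp : p.Prime) (hα : 1 ≤ α) (ht : t + 1 = p ^ α) (a : ℕ) :
    p ∣ Nat.choose a t ↔ ¬ (a % (t + 1) = t) := by
  have h : t = p ^ α - 1 := by omega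
  subst h
  rw [key p hp α a, Nat.sub_add_cancel (Nat.one_le_pow _ _ hp.pos)]
end

section
/- Let t+1 be a prime power. Then there exists no (t+1, t)-system on any finite ground set [N]. That is, there is no family A of subsets of [N] such that: (1) A is closed under pairwise intersections; (2) every t-element subset of [N] is contained in some member of A; and (3) for every A ∈ A, |A| is not congruent to N modulo t+1. -/
open Finset

/-- The "Möbius-like" weight on the lattice `L` (members of the family plus `univ`). -/
private def nuF {n : ℕ} (L : Finset (Finset (Fin n))) (B : Finset (Fin n)) : ℤ :=
  if B = Finset.univ then 1
  else - ∑ C ∈ (L.filter (fun C => B ⊂ C)).attach, nuF L C.1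
termination_by n - B.card
decreasing_by
  have h1 : B ⊂ C.1 := (Finset.mem_filter.mp C.2).2
  have h2 : B.card < C.1.card := Finset.card_lt_card h1
  have h3 : C.1.card ≤ n := le_trans (Finset.card_le_univ C.1) (by simp)
  omega

private lemma nuF_univ {n : ℕ} (L : Finset (Finset (Fin n))) :
    nuF L Finset.univ = 1 := by
  rw [nuF]; simp

private lemma nuF_ne {n : ℕ} (L : Finset (Finset (Fin n))) (B : Finset (Fin n))
    (hB : B ≠ Finset.univ) :
    nuF L B = - ∑ C ∈ L.filter (fun C => B ⊂ C), nuF L C := by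
  rw [nuF, if_neg hB, Finset.sum_attach]

private lemma sumA {n : ℕ} (L : Finset (Finset (Fin n))) (B : Finset (Fin n))
    (hBL : B ∈ L) (hB : B ≠ Finset.univ) :
    ∑ C ∈ L.filter (fun C => B ⊆ C), nuF L C = 0 := by
  have hsplit : L.filter (fun C => B ⊆ C) = insert B (L.filter (fun C => B ⊂ C)) := by
    ext C
    simp only [Finset.mem_filter, Finset.mem_insert]
    constructor
    · rintro ⟨hC, hsub⟩
      rcases eq_or_ne C B with h | h
      · exact Or.inl h
      · exact Or.inr ⟨hC, Finset.ssubset_iff_subset_ne.mpr ⟨hsub, Ne.symm h⟩⟩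
    · rintro (rfl | ⟨hC, hsub⟩)
      · exact ⟨hBL, Finset.Subset.refl _⟩
      · exact ⟨hC, hsub.subset⟩
  rw [hsplit, Finset.sum_insert (by simp only [Finset.mem_filter]; rintro ⟨-, h⟩; exact ssubset_irrefl _ h),
    nuF_ne L B hB, neg_add_cancel]

private lemma infClosed {n : ℕ} (A : Finset (Finset (Fin n)))
    (hA : ∀ X ∈ A, ∀ Y ∈ A, X ∩ Y ∈ A) :
    ∀ F : Finset (Finset (Fin n)), F.Nonempty → F ⊆ A → F.inf id ∈ A := by
  intro F hF
  induction hF using Finset.Nonempty.cons_induction with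
  | singleton a => intro h; simpa using h (Finset.mem_singleton_self a)
  | cons a s ha hs ih =>
    intro hsub
    rw [Finset.inf_cons]
    have h1 : a ∈ A := hsub (Finset.mem_cons_self a s)
    have h2 : s.inf id ∈ A := ih (fun x hx => hsub (Finset.mem_cons.mpr (Or.inr hx)))
    simpa using hA a h1 (s.inf id) h2

private lemma sumB {n : ℕ} (A : Finset (Finset (Fin n)))
    (hA : ∀ X ∈ A, ∀ Y ∈ A, X ∩ Y ∈ A) (hu : Finset.univ ∉ A)
    (S : Finset (Fin n)) (hS : ∃ D ∈ A, S ⊆ D) :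
    ∑ C ∈ (insert Finset.univ A).filter (fun C => S ⊆ C),
      nuF (insert Finset.univ A) C = 0 := by
  obtain ⟨D, hD, hSD⟩ := hS
  set L := insert Finset.univ A with hL
  set F := A.filter (fun C => S ⊆ C) with hF
  have hFne : F.Nonempty := ⟨D, Finset.mem_filter.mpr ⟨hD, hSD⟩⟩
  set D0 := F.inf id with hD0
  have hD0A : D0 ∈ A := infClosed A hA F hFne (Finset.filter_subset _ _)
  have hSD0 : S ⊆ D0 := Finset.le_inf fun C hC => (Finset.mem_filter.mp hC).2
  have hmin : ∀ C ∈ A, S ⊆ C → D0 ⊆ C := fun C hC hs =>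
    (by simpa using (Finset.inf_le (Finset.mem_filter.mpr ⟨hC, hs⟩ : C ∈ F) : F.inf id ≤ id C))
  have hfil : L.filter (fun C => S ⊆ C) = L.filter (fun C => D0 ⊆ C) := by
    ext C
    simp only [Finset.mem_filter, hL, Finset.mem_insert, and_congr_right_iff]
    rintro (rfl | hC)
    · exact ⟨fun _ => Finset.subset_univ _, fun _ => Finset.subset_univ _⟩
    · exact ⟨fun h => hmin C hC h, fun h => hSD0.trans h⟩
  rw [hfil]
  exact sumA L D0 (Finset.mem_insert_of_mem hD0A) (fun h => hu (h ▸ hD0A))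

private lemma chooseBase (p : ℕ) (hp : p.Prime) (m : ℕ) (hm : m < p) :
    (m.choose (p - 1) : ZMod p) = if m = p - 1 then 1 else 0 := by
  split_ifs with h
  · rw [h, Nat.choose_self]; norm_num
  · rw [Nat.choose_eq_zero_of_lt (by omega)]; norm_num

private lemma lucasPow (p : ℕ) (hp : p.Prime) : ∀ (a m : ℕ),
    ((m.choose (p ^ a - 1)) : ZMod p) = if m % p ^ a = p ^ a - 1 then 1 else 0 := by
  haveI := Fact.mk hp
  intro a
  induction a with
  | zero => intro m; simp [Nat.mod_one]
  | succ a ih =>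
    intro m
    have hp0 : 0 < p := hp.pos
    rw [pow_succ']
    have hM : 1 ≤ p ^ a := Nat.one_le_pow _ _ hp0
    set M := p ^ a with hMdef
    have hPM : p ≤ p * M := Nat.le_mul_of_pos_right p (by omega)
    have hmulsub : p * (M - 1) = p * M - p := by rw [Nat.mul_sub, mul_one]
    have e : p * M - 1 = p * (M - 1) + (p - 1) := by
      set X := p * M with hX
      set Y := p * (M - 1) with hY
      have hp1 : 1 ≤ p := hp0
      omega
    have hmod : (p * M - 1) % p = p - 1 := by
      rw [e, Nat.mul_add_mod]; exact Nat.mod_eq_of_lt (by omega)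
    have hdiv : (p * M - 1) / p = M - 1 := by
      rw [e, Nat.mul_add_div hp0, Nat.div_eq_of_lt (by omega), add_zero]
    have lucas := Choose.choose_modEq_choose_mod_mul_choose_div_nat
      (n := m) (k := p * M - 1) (p := p)
    have hcast : (m.choose (p * M - 1) : ZMod p)
        = ((m % p).choose (p - 1) : ZMod p) * ((m / p).choose (M - 1) : ZMod p) := by
      have h2 := (ZMod.natCast_eq_natCast_iff _ _ _).mpr lucas
      rw [hmod, hdiv] at h2
      rw [h2]; push_cast; ring
    rw [hcast, chooseBase p hp (m % p) (Nat.mod_lt m hp0), ih (m / p)]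
    have f1 : m % (p * M) % p = m % p := Nat.mod_mul_right_mod m p M
    have f2 : m % (p * M) / p = m / p % M := Nat.mod_mul_right_div_self m p M
    set u := m % (p * M) with hu
    have f4 : p * (u / p) + u % p = u := Nat.div_add_mod u p
    have key : u = p * M - 1 ↔ (m % p = p - 1 ∧ m / p % M = M - 1) := by
      constructor
      · intro h
        rw [h] at f1 f2
        rw [hmod] at f1; rw [hdiv] at f2
        exact ⟨f1.symm, f2.symm⟩
      · rintro ⟨h1, h2⟩
        calc u = p * (u / p) + u % p := f4.symm
          _ = p * (M - 1) + (p - 1) := by rw [f2, h2, f1, h1]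
          _ = p * M - 1 := e.symm
    by_cases hc : u = p * M - 1
    · obtain ⟨ha, hb⟩ := key.mp hc
      rw [if_pos hc, if_pos ha, if_pos hb, one_mul]
    · rw [if_neg hc]
      have hor : ¬(m % p = p - 1) ∨ ¬(m / p % M = M - 1) := by
        by_contra h
        push_neg at h
        exact hc (key.mpr ⟨h.1, h.2⟩)
      rcases hor with h | h
      · rw [if_neg h, zero_mul]
      · rw [if_neg h, mul_zero]

theorem stmt3 (p α t N : ℕ) (hp : p.Prime) (hα : 1 ≤ α) (ht : t + 1 = p ^ α)
    (htN : t ≤ N) :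
    ¬ ∃ A : Finset (Finset (Fin N)),
      (∀ X ∈ A, ∀ Y ∈ A, X ∩ Y ∈ A) ∧
      (∀ S : Finset (Fin N), S.card = t → ∃ X ∈ A, S ⊆ X) ∧
      (∀ X ∈ A, ¬ (X.card % (t + 1) = N % (t + 1))) := by
  haveI := Fact.mk hp
  rintro ⟨A, hInt, hCov, hMod⟩
  have hp2 : 2 ≤ p := hp.two_le
  have hq2 : 2 ≤ t + 1 := by
    have : p ≤ p ^ α := Nat.le_self_pow (by omega) p
    omega
  have hcardu : (Finset.univ : Finset (Fin N)).card = N := by simp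
  have huA : Finset.univ ∉ A := fun h => hMod _ h (by rw [hcardu])
  set q := t + 1 with hq
  set L := insert Finset.univ A with hL
  set s := 2 * q - 1 - N % q with hs
  have hNq : N % q < q := Nat.mod_lt _ (by omega)
  have hNs : (N + s) % q = q - 1 := by
    have hd : q * (N / q) + N % q = N := Nat.div_add_mod N q
    have h1 : N + s = q * (N / q + 1) + (q - 1) := by
      rw [Nat.mul_add, Nat.mul_one]
      set X := q * (N / q) with hX
      omega
    rw [h1, Nat.mul_add_mod]
    exact Nat.mod_eq_of_lt (by omega)
  have hAc : ∀ C ∈ A, (C.card + s) % q ≠ q - 1 := by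
    intro C hC hcon
    apply hMod C hC
    have hmodeq : C.card + s ≡ N + s [MOD q] := by
      unfold Nat.ModEq
      rw [hcon, hNs]
    exact Nat.ModEq.add_right_cancel' s hmodeq
  have hcover : ∀ S : Finset (Fin N), S.card ≤ t → ∃ D ∈ A, S ⊆ D := by
    intro S hSc
    obtain ⟨T, hST, hT⟩ := Finset.exists_superset_card_eq hSc (by simpa using htN)
    obtain ⟨X, hX, hTX⟩ := hCov T hT
    exact ⟨X, hX, hST.trans hTX⟩
  set Sfin := (Finset.univ : Finset (Finset (Fin N))).filter (fun S => S.card ≤ t) with hSfin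
  have hzero : ∀ S ∈ Sfin,
      ∑ C ∈ L, (if S ⊆ C then (s.choose (t - S.card) : ℤ) else 0) * nuF L C = 0 := by
    intro S hS
    have hcS : S.card ≤ t := (Finset.mem_filter.mp hS).2
    have heq : ∑ C ∈ L, (if S ⊆ C then (s.choose (t - S.card) : ℤ) else 0) * nuF L C
        = (s.choose (t - S.card) : ℤ) * ∑ C ∈ L.filter (fun C => S ⊆ C), nuF L C := by
      rw [Finset.mul_sum, Finset.sum_filter]
      apply Finset.sum_congr rfl
      intro C _
      split_ifs <;> simp
    rw [heq, sumB A hInt huA S (hcover S hcS), mul_zero]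
  have hswap : ∑ C ∈ L,
      (∑ S ∈ Sfin, (if S ⊆ C then (s.choose (t - S.card) : ℤ) else 0)) * nuF L C = 0 := by
    calc ∑ C ∈ L, (∑ S ∈ Sfin, (if S ⊆ C then (s.choose (t - S.card) : ℤ) else 0)) * nuF L C
        = ∑ C ∈ L, ∑ S ∈ Sfin,
            (if S ⊆ C then (s.choose (t - S.card) : ℤ) else 0) * nuF L C := by
          refine Finset.sum_congr rfl fun C _ => ?_
          rw [Finset.sum_mul]
      _ = ∑ S ∈ Sfin, ∑ C ∈ L,
            (if S ⊆ C then (s.choose (t - S.card) : ℤ) else 0) * nuF L C := Finset.sum_comm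
      _ = 0 := Finset.sum_eq_zero hzero
  have hw : ∀ C : Finset (Fin N),
      ∑ S ∈ Sfin, (if S ⊆ C then (s.choose (t - S.card) : ℤ) else 0)
        = ((C.card + s).choose t : ℤ) := by
    intro C
    have hfil2 : Sfin.filter (fun S => S ⊆ C) = C.powerset.filter (fun S => S.card ≤ t) := by
      ext S
      simp only [hSfin, Finset.mem_filter, Finset.mem_powerset, Finset.mem_univ, true_and]
      tauto
    calc ∑ S ∈ Sfin, (if S ⊆ C then (s.choose (t - S.card) : ℤ) else 0)
        = ∑ S ∈ Sfin.filter (fun S => S ⊆ C), (s.choose (t - S.card) : ℤ) :=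
          (Finset.sum_filter _ _).symm
      _ = ∑ S ∈ C.powerset.filter (fun S => S.card ≤ t), (s.choose (t - S.card) : ℤ) := by
          rw [hfil2]
      _ = ∑ S ∈ C.powerset, (if S.card ≤ t then (s.choose (t - S.card) : ℤ) else 0) :=
          Finset.sum_filter _ _
      _ = ∑ j ∈ Finset.range (C.card + 1), ∑ S ∈ Finset.powersetCard j C,
            (if S.card ≤ t then (s.choose (t - S.card) : ℤ) else 0) := by
          rw [Finset.powerset_card_disjiUnion]; exact Finset.sum_disjiUnion _ _ _
      _ = ∑ j ∈ Finset.range (C.card + 1),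
            (C.card.choose j : ℤ) * (if j ≤ t then (s.choose (t - j) : ℤ) else 0) := by
          refine Finset.sum_congr rfl fun j _ => ?_
          have hconst : ∀ S ∈ Finset.powersetCard j C,
              (if S.card ≤ t then (s.choose (t - S.card) : ℤ) else 0)
                = (if j ≤ t then (s.choose (t - j) : ℤ) else 0) := by
            intro S hS
            rw [(Finset.mem_powersetCard.mp hS).2]
          rw [Finset.sum_congr rfl hconst, Finset.sum_const, Finset.card_powersetCard,
            nsmul_eq_mul]
      _ = ∑ j ∈ Finset.range (max C.card t + 1),
            (C.card.choose j : ℤ) * (if j ≤ t then (s.choose (t - j) : ℤ) else 0) := by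
          refine Finset.sum_subset (Finset.range_subset_range.mpr (by omega)) fun j hj hnj => ?_
          rw [Finset.mem_range] at hj hnj
          have hlt : C.card < j := by omega
          simp [Nat.choose_eq_zero_of_lt hlt]
      _ = ∑ j ∈ Finset.range (t + 1),
            (C.card.choose j : ℤ) * (if j ≤ t then (s.choose (t - j) : ℤ) else 0) := by
          refine (Finset.sum_subset (Finset.range_subset_range.mpr (by omega)) fun j hj hnj => ?_).symm
          rw [Finset.mem_range] at hj hnj
          have hgt : ¬ j ≤ t := by omega
          rw [if_neg hgt, mul_zero]
      _ = ∑ j ∈ Finset.range (t + 1), (C.card.choose j : ℤ) * (s.choose (t - j) : ℤ) := by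
          refine Finset.sum_congr rfl fun j hj => ?_
          rw [Finset.mem_range] at hj
          rw [if_pos (by omega)]
      _ = ((C.card + s).choose t : ℤ) := by
          have hv : (C.card + s).choose t
              = ∑ j ∈ Finset.range (t + 1), C.card.choose j * s.choose (t - j) := by
            rw [Nat.add_choose_eq]
            exact Finset.Nat.sum_antidiagonal_eq_sum_range_succ_mk _ t
          rw [hv]
          push_cast
          ring
  have hW : ∑ C ∈ L, ((C.card + s).choose t : ℤ) * nuF L C = 0 := by
    rw [← hswap]
    exact Finset.sum_congr rfl fun C _ => by rw [hw C]
  have hZ : (0 : ZMod p)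
      = ∑ C ∈ L, (((C.card + s).choose t : ℕ) : ZMod p) * ((nuF L C : ℤ) : ZMod p) := by
    have hc := congrArg (fun z : ℤ => ((z : ZMod p))) hW
    push_cast at hc
    rw [← hc]
  have hqpa : q = p ^ α := ht
  have hterm : t = q - 1 := by omega
  rw [hL, Finset.sum_insert huA] at hZ
  have huniv : ((((Finset.univ : Finset (Fin N)).card + s).choose t : ℕ) : ZMod p) = 1 := by
    rw [hcardu, hterm, hqpa, lucasPow p hp α (N + s), ← hqpa, if_pos hNs]
  have hrest : ∀ C ∈ A, (((C.card + s).choose t : ℕ) : ZMod p) = 0 := by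
    intro C hC
    rw [hterm, hqpa, lucasPow p hp α (C.card + s), ← hqpa, if_neg (hAc C hC)]
  rw [huniv, one_mul, Finset.sum_eq_zero (fun C hC => by rw [hrest C hC, zero_mul]),
    add_zero, nuF_univ] at hZ
  simp only [Int.cast_one] at hZ
  exact one_ne_zero hZ.symm
end

section
/- Let r ≥ 2 and 1 ≤ ℓ < r. Let H be an r-uniform hypergraph on n vertices containing no sunflower S(r,s,k) for every s with ℓ ≤ s ≤ r−1. Then H has at most n^ℓ · (rk)^{r−ℓ} edges. -/
/-- `P` is a sunflower with `k` petals, uniformity `r` and kernel of size `t`: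
`k` distinct `r`-element sets with a common `t`-element kernel `C` contained in each,
such that the pairwise intersections all equal `C` (so the petals are pairwise disjoint). -/
def IsSunflower {V : Type*} [DecidableEq V] (r t k : ℕ) (P : Finset (Finset V)) : Prop :=
  P.card = k ∧ (∀ e ∈ P, e.card = r) ∧
    ∃ C : Finset V, C.card = t ∧ (∀ e ∈ P, C ⊆ e) ∧
      ∀ e ∈ P, ∀ f ∈ P, e ≠ f → e ∩ f = C

theorem stmt7 (r ℓ k n : ℕ) (hr : 2 ≤ r) (hℓ : 1 ≤ ℓ) (hℓr : ℓ < r)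
    (H : Finset (Finset (Fin n))) (hunif : ∀ e ∈ H, e.card = r)
    (hfree : ∀ s : ℕ, ℓ ≤ s → s ≤ r - 1 → ∀ P ⊆ H, ¬ IsSunflower r s k P) :
    H.card ≤ n ^ ℓ * (r * k) ^ (r - ℓ) := by
  classical
  have key : ∀ d : ℕ, ∀ S : Finset (Fin n), ℓ ≤ S.card → S.card + d = r →
      (H.filter (fun e => S ⊆ e)).card ≤ (r * k) ^ d := by
    intro d
    induction d with
    | zero =>
      intro S hS hcard
      simp only [pow_zero]
      apply Finset.card_le_one.mpr
      intro a ha b hb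
      simp only [Finset.mem_filter] at ha hb
      have ha' : S = a := Finset.eq_of_subset_of_card_le ha.2
        (by rw [hunif a ha.1]; omega)
      have hb' : S = b := Finset.eq_of_subset_of_card_le hb.2
        (by rw [hunif b hb.1]; omega)
      rw [← ha', ← hb']
    | succ d ih =>
      intro S hS hcard
      set F := H.filter (fun e => S ⊆ e) with hF
      -- maximal family with pairwise intersections equal to S
      have hne : (F.powerset.filter
          (fun M => ∀ e ∈ M, ∀ f ∈ M, e ≠ f → e ∩ f = S)).Nonempty := by
        refine ⟨∅, ?_⟩
        simp
      obtain ⟨M, hMmem, hmax⟩ := Finset.exists_max_image _ Finset.card hne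
      simp only [Finset.mem_filter, Finset.mem_powerset] at hMmem
      obtain ⟨hMF, hMprop⟩ := hMmem
      have hMH : M ⊆ H := hMF.trans (Finset.filter_subset _ _)
      have hMS : ∀ e ∈ M, S ⊆ e := by
        intro e he
        have := hMF he
        simp only [hF, Finset.mem_filter] at this
        exact this.2
      -- M has fewer than k elements
      have hMcard : M.card < k := by
        by_contra hcon
        push_neg at hcon
        obtain ⟨M', hM'M, hM'card⟩ := Finset.exists_subset_card_eq hcon
        refine hfree S.card hS (by omega) M' (hM'M.trans hMH) ?_
        refine ⟨hM'card, fun e he => hunif e (hMH (hM'M he)), S, rfl,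
          fun e he => hMS e (hM'M he), ?_⟩
        intro e he f hf hef
        exact hMprop e (hM'M he) f (hM'M hf) hef
      set T := M.biUnion (fun f => f \ S) with hT
      have hTS : ∀ v ∈ T, v ∉ S := by
        intro v hv
        simp only [hT, Finset.mem_biUnion, Finset.mem_sdiff] at hv
        obtain ⟨f, _, _, h⟩ := hv
        exact h
      have hTcard : T.card ≤ r * k := by
        calc T.card ≤ ∑ f ∈ M, (f \ S).card := Finset.card_biUnion_le
        _ ≤ ∑ _f ∈ M, r := by
            refine Finset.sum_le_sum fun f hf => ?_
            exact (Finset.card_le_card (Finset.sdiff_subset)).trans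
              (le_of_eq (hunif f (hMH hf)))
        _ = M.card * r := by rw [Finset.sum_const, smul_eq_mul]
        _ ≤ k * r := Nat.mul_le_mul_right r (le_of_lt hMcard)
        _ = r * k := Nat.mul_comm k r
      -- every edge in F meets T outside S
      have hcover : ∀ e ∈ F, ∃ v ∈ T, v ∈ e := by
        intro e heF
        by_contra hcon
        push_neg at hcon
        have heS : S ⊆ e := by
          have := heF; simp only [hF, Finset.mem_filter] at this; exact this.2
        have heH : e ∈ H := by
          have := heF; simp only [hF, Finset.mem_filter] at this; exact this.1
        have hene : (e \ S).Nonempty := by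
          rw [← Finset.card_pos, Finset.card_sdiff_of_subset heS, hunif e heH]
          omega
        have heM : e ∉ M := by
          intro heM
          obtain ⟨v, hv⟩ := hene
          exact hcon v (Finset.mem_biUnion.mpr ⟨e, heM, hv⟩)
            (Finset.mem_sdiff.mp hv).1
        -- insert e M is a strictly larger family with the property
        have hins : insert e M ∈ F.powerset.filter
            (fun M => ∀ a ∈ M, ∀ b ∈ M, a ≠ b → a ∩ b = S) := by
          simp only [Finset.mem_filter, Finset.mem_powerset]
          constructor
          · exact Finset.insert_subset heF hMF
          · have hkey : ∀ f ∈ M, e ∩ f = S := by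
              intro f hf
              apply Finset.Subset.antisymm
              · intro x hx
                simp only [Finset.mem_inter] at hx
                by_contra hxS
                exact hcon x (Finset.mem_biUnion.mpr
                  ⟨f, hf, Finset.mem_sdiff.mpr ⟨hx.2, hxS⟩⟩) hx.1
              · exact Finset.subset_inter heS (hMS f hf)
            intro a ha b hb hab
            rcases Finset.mem_insert.mp ha with ha' | ha' <;>
              rcases Finset.mem_insert.mp hb with hb' | hb'
            · exact absurd (ha'.trans hb'.symm) hab
            · rw [ha']; exact hkey b hb'
            · rw [hb', Finset.inter_comm]; exact hkey a ha'
            · exact hMprop a ha' b hb' hab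
        have := hmax _ hins
        rw [Finset.card_insert_of_notMem heM] at this
        omega
      -- bound F via the cover
      have hsub : F ⊆ T.biUnion (fun v => H.filter (fun e => insert v S ⊆ e)) := by
        intro e heF
        obtain ⟨v, hvT, hve⟩ := hcover e heF
        simp only [hF, Finset.mem_filter] at heF
        exact Finset.mem_biUnion.mpr ⟨v, hvT, Finset.mem_filter.mpr
          ⟨heF.1, Finset.insert_subset hve heF.2⟩⟩
      calc F.card ≤ ∑ v ∈ T, (H.filter (fun e => insert v S ⊆ e)).card :=
            (Finset.card_le_card hsub).trans Finset.card_biUnion_le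
        _ ≤ ∑ _v ∈ T, (r * k) ^ d := by
            refine Finset.sum_le_sum fun v hv => ?_
            have hcard' : (insert v S).card = S.card + 1 :=
              Finset.card_insert_of_notMem (hTS v hv)
            exact ih (insert v S) (by omega) (by omega)
        _ = T.card * (r * k) ^ d := by rw [Finset.sum_const, smul_eq_mul]
        _ ≤ (r * k) * (r * k) ^ d := Nat.mul_le_mul_right _ hTcard
        _ = (r * k) ^ (d + 1) := (pow_succ' (r * k) d).symm
  -- assemble
  have hsub : H ⊆ (Finset.univ.powersetCard ℓ).biUnion
      (fun S => H.filter (fun e => S ⊆ e)) := by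
    intro e he
    obtain ⟨S, hSe, hScard⟩ := Finset.exists_subset_card_eq (s := e) (n := ℓ)
      (by rw [hunif e he]; omega)
    exact Finset.mem_biUnion.mpr ⟨S,
      Finset.mem_powersetCard.mpr ⟨Finset.subset_univ S, hScard⟩,
      Finset.mem_filter.mpr ⟨he, hSe⟩⟩
  calc H.card ≤ ∑ S ∈ Finset.univ.powersetCard ℓ,
        (H.filter (fun e => S ⊆ e)).card :=
        (Finset.card_le_card hsub).trans Finset.card_biUnion_le
    _ ≤ ∑ _S ∈ Finset.univ.powersetCard ℓ, (r * k) ^ (r - ℓ) := by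
        refine Finset.sum_le_sum fun S hS => ?_
        have hScard := (Finset.mem_powersetCard.mp hS).2
        exact key (r - ℓ) S (le_of_eq hScard.symm) (by omega)
    _ = (Finset.univ.powersetCard ℓ : Finset (Finset (Fin n))).card * (r * k) ^ (r - ℓ) := by
        rw [Finset.sum_const, smul_eq_mul]
    _ ≤ n ^ ℓ * (r * k) ^ (r - ℓ) := by
        refine Nat.mul_le_mul_right _ ?_
        rw [Finset.card_powersetCard, Finset.card_univ, Fintype.card_fin]
        exact Nat.choose_le_pow n ℓ
end

section
/- Let H be an r-uniform hypergraph with no sunflower S(r,|S|,k) for any subset size |S| with ℓ ≤ |S| ≤ r−1, and let S be any set of vertices with ℓ ≤ |S| ≤ r. Then the link hypergraph L_S of S in H has at most (rk)^{r−|S|} edges. -/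
lemma stmt8_aux {V : Type*} [DecidableEq V] (r ℓ k : ℕ) (H : Finset (Finset V))
    (hunif : ∀ e ∈ H, e.card = r)
    (hfree : ∀ s : ℕ, ℓ ≤ s → s ≤ r - 1 → ∀ P ⊆ H, ¬ IsSunflower r s k P) :
    ∀ n (S : Finset V), ℓ ≤ S.card → S.card ≤ r → r - S.card = n →
      (H.filter fun e => S ⊆ e).card ≤ (r * k) ^ n := by
  intro n
  induction n with
  | zero =>
    intro S h1 h2 hn
    have hSr : S.card = r := by omega
    have : (H.filter fun e => S ⊆ e) ⊆ {S} := by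
      intro e he
      simp only [Finset.mem_filter] at he
      have : e = S := by
        symm
        exact Finset.eq_of_subset_of_card_le he.2 (by rw [hunif e he.1, hSr])
      simp [this]
    calc (H.filter fun e => S ⊆ e).card ≤ ({S} : Finset (Finset V)).card :=
          Finset.card_le_card this
      _ = 1 := Finset.card_singleton S
      _ = (r * k) ^ 0 := (pow_zero _).symm
  | succ n ih =>
    intro S h1 h2 hn
    classical
    have hlt : S.card < r := by omega
    rcases Nat.eq_zero_or_pos k with hk | hk
    · exfalso
      apply hfree S.card h1 (by omega) ∅ (Finset.empty_subset _)
      refine ⟨by simp [hk], by simp, S, rfl, by simp, by simp⟩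
    set L := H.filter fun e => S ⊆ e with hL
    -- maximal pairwise-petal-disjoint family
    set Fam := L.powerset.filter
      (fun M => ∀ e ∈ M, ∀ f ∈ M, e ≠ f → (e \ S) ∩ (f \ S) = ∅) with hFam
    have hne : Fam.Nonempty := ⟨∅, by simp [hFam]⟩
    obtain ⟨M, hMF, hMmax⟩ := Fam.exists_max_image Finset.card hne
    simp only [hFam, Finset.mem_filter, Finset.mem_powerset] at hMF
    obtain ⟨hML, hMdisj⟩ := hMF
    have hpetal : ∀ e ∈ M, (e \ S).card = r - S.card := by
      intro e he
      have heL := hML he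
      simp only [hL, Finset.mem_filter] at heL
      rw [Finset.card_sdiff_of_subset heL.2, hunif e heL.1]
    -- M.card < k
    have hMk : M.card < k := by
      by_contra hcon
      push_neg at hcon
      obtain ⟨P, hPM, hPcard⟩ := Finset.exists_subset_card_eq hcon
      have hPL : ∀ e ∈ P, e ∈ L := fun e he => hML (hPM he)
      apply hfree S.card h1 (by omega) P
      · intro e he
        have := hPL e he
        simp only [hL, Finset.mem_filter] at this
        exact this.1
      refine ⟨hPcard, ?_, S, rfl, ?_, ?_⟩
      · intro e he
        have := hPL e he
        simp only [hL, Finset.mem_filter] at this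
        exact hunif e this.1
      · intro e he
        have := hPL e he
        simp only [hL, Finset.mem_filter] at this
        exact this.2
      · intro e he f hf hef
        apply Finset.Subset.antisymm
        · intro x hx
          simp only [Finset.mem_inter] at hx
          by_contra hxS
          have : x ∈ (e \ S) ∩ (f \ S) := by
            simp [Finset.mem_inter, Finset.mem_sdiff, hx.1, hx.2, hxS]
          rw [hMdisj e (hPM he) f (hPM hf) hef] at this
          exact absurd this (Finset.notMem_empty x)
        · intro x hx
          have h1 := hPL e he; have h2 := hPL f hf
          simp only [hL, Finset.mem_filter] at h1 h2
          exact Finset.mem_inter.2 ⟨h1.2 hx, h2.2 hx⟩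
    set T := M.biUnion (fun e => e \ S) with hT
    have hTcard : T.card ≤ (k - 1) * (r - S.card) := by
      calc T.card ≤ ∑ e ∈ M, (e \ S).card := Finset.card_biUnion_le
        _ = ∑ e ∈ M, (r - S.card) := Finset.sum_congr rfl hpetal
        _ = M.card * (r - S.card) := by rw [Finset.sum_const, smul_eq_mul]
        _ ≤ (k - 1) * (r - S.card) := Nat.mul_le_mul_right _ (by omega)
    -- cover property
    have hcover : ∀ e ∈ L, ∃ v ∈ T, v ∈ e ∧ v ∉ S := by
      intro e heL
      by_cases heM : e ∈ M
      · have : (e \ S).Nonempty := by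
          rw [← Finset.card_pos, hpetal e heM]; omega
        obtain ⟨v, hv⟩ := this
        refine ⟨v, Finset.mem_biUnion.2 ⟨e, heM, hv⟩, ?_, ?_⟩
        · exact (Finset.mem_sdiff.1 hv).1
        · exact (Finset.mem_sdiff.1 hv).2
      · by_contra hcon
        push_neg at hcon
        -- no f ∈ M with intersecting petal, else would get v ∈ T
        have hdis : ∀ f ∈ M, (e \ S) ∩ (f \ S) = ∅ := by
          intro f hf
          rw [Finset.eq_empty_iff_forall_notMem]
          intro v hv
          simp only [Finset.mem_inter, Finset.mem_sdiff] at hv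
          exact hv.1.2 (hcon v (Finset.mem_biUnion.2 ⟨f, hf, Finset.mem_sdiff.2 hv.2⟩)
            hv.1.1)
        have hins : insert e M ∈ Fam := by
          simp only [hFam, Finset.mem_filter, Finset.mem_powerset]
          constructor
          · exact Finset.insert_subset heL hML
          · intro a ha b hb hab
            rcases Finset.mem_insert.1 ha with ha' | ha' <;>
              rcases Finset.mem_insert.1 hb with hb' | hb'
            · exact absurd (ha'.trans hb'.symm) hab
            · subst ha'; exact hdis b hb'
            · subst hb'; rw [Finset.inter_comm]; exact hdis a ha'
            · exact hMdisj a ha' b hb' hab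
        have := hMmax _ hins
        rw [Finset.card_insert_of_notMem heM] at this
        omega
    -- L covered by biUnion over T
    have hsub : L ⊆ T.biUnion (fun v => H.filter fun e => insert v S ⊆ e) := by
      intro e heL
      obtain ⟨v, hvT, hve, hvS⟩ := hcover e heL
      refine Finset.mem_biUnion.2 ⟨v, hvT, ?_⟩
      simp only [Finset.mem_filter]
      simp only [hL, Finset.mem_filter] at heL
      exact ⟨heL.1, Finset.insert_subset hve heL.2⟩
    calc L.card ≤ (T.biUnion (fun v => H.filter fun e => insert v S ⊆ e)).card :=
          Finset.card_le_card hsub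
      _ ≤ ∑ v ∈ T, (H.filter fun e => insert v S ⊆ e).card := Finset.card_biUnion_le
      _ ≤ ∑ v ∈ T, (r * k) ^ n := by
          apply Finset.sum_le_sum
          intro v hvT
          have hvS : v ∉ S := by
            simp only [hT, Finset.mem_biUnion, Finset.mem_sdiff] at hvT
            obtain ⟨f, _, _, h⟩ := hvT
            exact h
          have hcard : (insert v S).card = S.card + 1 :=
            Finset.card_insert_of_notMem hvS
          exact ih (insert v S) (by omega) (by omega) (by omega)
      _ = T.card * (r * k) ^ n := by rw [Finset.sum_const, smul_eq_mul]
      _ ≤ (r * k) * (r * k) ^ n := by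
          apply Nat.mul_le_mul_right
          calc T.card ≤ (k - 1) * (r - S.card) := hTcard
            _ ≤ k * r := Nat.mul_le_mul (by omega) (by omega)
            _ = r * k := Nat.mul_comm _ _
      _ = (r * k) ^ (n + 1) := (pow_succ' _ _).symm

theorem stmt8 {V : Type*} [DecidableEq V] (r ℓ k : ℕ) (H : Finset (Finset V))
    (hunif : ∀ e ∈ H, e.card = r)
    (hfree : ∀ s : ℕ, ℓ ≤ s → s ≤ r - 1 → ∀ P ⊆ H, ¬ IsSunflower r s k P)
    (S : Finset V) (h1 : ℓ ≤ S.card) (h2 : S.card ≤ r) :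
    (H.filter fun e => S ⊆ e).card ≤ (r * k) ^ (r - S.card) := by
  exact stmt8_aux r ℓ k H hunif hfree (r - S.card) S h1 h2 rfl
end

section
/- Let H be an r-uniform hypergraph containing no sunflower S(r,t,k). Suppose there exist k distinct (r−i)-element vertex sets L_1,…,L_k forming a sunflower S(r−i,t,k) (common kernel of size t, pairwise disjoint petals), each of which is rk-extending in H, meaning for each j there are rk edges of H all containing L_j and pairwise disjoint outside L_j. Then we obtain a contradiction; i.e., H cannot contain k rk-extending (r−i)-sets forming a copy of S(r−i,t,k), for any 1 ≤ i ≤ r−t−1. -/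
/-- A vertex set `L` is `m`-extending in `H` if there are `m` edges of `H`,
all containing `L`, which are pairwise disjoint outside of `L`. -/
def IsExtending {V : Type*} [DecidableEq V] (m : ℕ) (H : Finset (Finset V))
    (L : Finset V) : Prop :=
  ∃ E ⊆ H, E.card = m ∧ (∀ e ∈ E, L ⊆ e) ∧
    ∀ e ∈ E, ∀ f ∈ E, e ≠ f → Disjoint (e \ L) (f \ L)

theorem stmt9 {V : Type*} [DecidableEq V] (r t i k : ℕ) (hi : 1 ≤ i)
    (hi2 : i ≤ r - t - 1)
    (H : Finset (Finset V)) (hunif : ∀ e ∈ H, e.card = r)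
    (hfree : ∀ P ⊆ H, ¬ IsSunflower r t k P)
    (L : Finset (Finset V)) (hsun : IsSunflower (r - i) t k L)
    (hext : ∀ A ∈ L, IsExtending (r * k) H A) :
    False := by
  classical
  obtain ⟨hLcard, hLunif, C, hCcard, hCsub, hCint⟩ := hsun
  have hr : t + i + 1 ≤ r := by omega
  -- Greedy construction of edges with pairwise disjoint petals avoiding all of L.
  have key : ∀ Ls : Finset (Finset V), Ls ⊆ L →
      ∃ g : Finset V → Finset V,
        (∀ A ∈ Ls, g A ∈ H ∧ A ⊆ g A ∧ Disjoint (g A \ A) (L.sup id)) ∧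
        (∀ A ∈ Ls, ∀ B ∈ Ls, A ≠ B → Disjoint (g A \ A) (g B \ B)) := by
    intro Ls
    induction Ls using Finset.induction_on with
    | empty => exact fun _ => ⟨id, by simp, by simp⟩
    | @insert A Ls' hA ih =>
      intro hsub
      have hAL : A ∈ L := hsub (Finset.mem_insert_self _ _)
      have hLs' : Ls' ⊆ L := fun x hx => hsub (Finset.mem_insert_of_mem hx)
      obtain ⟨g, hg1, hg2⟩ := ih hLs'
      have hk : 1 ≤ k := hLcard ▸ Finset.card_pos.2 ⟨A, hAL⟩
      obtain ⟨E, hEH, hEcard, hEsub, hEdisj⟩ := hext A hAL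
      set Bad : Finset V :=
        ((L.erase A).biUnion fun m => m \ A) ∪ (Ls'.biUnion fun B => g B \ B) with hBadDef
      have hBadcard : Bad.card < r * k := by
        have h1 : ((L.erase A).biUnion fun m => m \ A).card ≤ (k - 1) * (r - i - t) := by
          calc ((L.erase A).biUnion fun m => m \ A).card
              ≤ ∑ m ∈ L.erase A, (m \ A).card := Finset.card_biUnion_le
            _ ≤ ∑ _m ∈ L.erase A, (r - i - t) := by
                refine Finset.sum_le_sum fun m hm => ?_
                have hmL : m ∈ L := Finset.mem_of_mem_erase hm
                have hne : m ≠ A := Finset.ne_of_mem_erase hm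
                have hint : m ∩ A = C := hCint m hmL A hAL hne
                have := Finset.card_sdiff_add_card_inter m A
                rw [hint, hCcard, hLunif m hmL] at this
                omega
            _ = (k - 1) * (r - i - t) := by
                rw [Finset.sum_const, Finset.card_erase_of_mem hAL, hLcard, smul_eq_mul]
        have h2 : (Ls'.biUnion fun B => g B \ B).card ≤ (k - 1) * i := by
          calc (Ls'.biUnion fun B => g B \ B).card
              ≤ ∑ B ∈ Ls', (g B \ B).card := Finset.card_biUnion_le
            _ ≤ ∑ _B ∈ Ls', i := by
                refine Finset.sum_le_sum fun B hB => ?_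
                obtain ⟨hgH, hgsub, -⟩ := hg1 B hB
                have hcard : (g B \ B).card = (g B).card - B.card := Finset.card_sdiff_of_subset hgsub
                rw [hcard, hunif _ hgH, hLunif B (hLs' hB)]
                omega
            _ = Ls'.card * i := by rw [Finset.sum_const, smul_eq_mul]
            _ ≤ (k - 1) * i := by
                have : Ls' ⊆ L.erase A := fun x hx =>
                  Finset.mem_erase.2 ⟨fun h => hA (h ▸ hx), hLs' hx⟩
                have := Finset.card_le_card this
                rw [Finset.card_erase_of_mem hAL, hLcard] at this
                exact Nat.mul_le_mul_right i this
        calc Bad.card ≤ ((L.erase A).biUnion fun m => m \ A).card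
              + (Ls'.biUnion fun B => g B \ B).card := Finset.card_union_le _ _
          _ ≤ (k - 1) * (r - i - t) + (k - 1) * i := Nat.add_le_add h1 h2
          _ = (k - 1) * ((r - i - t) + i) := by ring
          _ = (k - 1) * (r - t) := by congr 1; omega
          _ ≤ (k - 1) * r := Nat.mul_le_mul_left _ (Nat.sub_le r t)
          _ < k * r := (Nat.mul_lt_mul_right (show 0 < r by omega)).2 (by omega)
          _ = r * k := Nat.mul_comm k r
      -- there is an edge in E whose petal avoids Bad
      have hgood : ∃ e ∈ E, Disjoint (e \ A) Bad := by
        by_contra hcon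
        push_neg at hcon
        have hne : ∀ e ∈ E, ∃ x, x ∈ (e \ A) ∩ Bad := fun e he =>
          Finset.not_disjoint_iff_nonempty_inter.1 (hcon e he)
        have hV : Nonempty V := by
          have hE0 : E.Nonempty := Finset.card_pos.1 (by rw [hEcard]; exact Nat.mul_pos (by omega) hk)
          obtain ⟨e, he⟩ := hE0
          have he0 : e.Nonempty := Finset.card_pos.1 (by rw [hunif e (hEH he)]; omega)
          exact ⟨he0.choose⟩
        choose! v hv using hne
        have hmaps : ∀ e ∈ E, v e ∈ Bad := fun e he => (Finset.mem_inter.1 (hv e he)).2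
        have hlt : Bad.card < E.card := by rw [hEcard]; exact hBadcard
        obtain ⟨e1, he1, e2, he2, hne12, heq⟩ :=
          Finset.exists_ne_map_eq_of_card_lt_of_maps_to hlt hmaps
        have d := hEdisj e1 he1 e2 he2 hne12
        have h1 : v e1 ∈ e1 \ A := (Finset.mem_inter.1 (hv e1 he1)).1
        have h2 : v e2 ∈ e2 \ A := (Finset.mem_inter.1 (hv e2 he2)).1
        exact Finset.disjoint_left.1 d h1 (heq ▸ h2)
      obtain ⟨e, heE, hedisj⟩ := hgood
      refine ⟨Function.update g A e, ?_, ?_⟩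
      · intro X hX
        rcases Finset.mem_insert.1 hX with hXeq | hX'
        · rw [hXeq, Function.update_self]
          refine ⟨hEH heE, hEsub e heE, Finset.disjoint_left.2 fun x hx hxsup => ?_⟩
          obtain ⟨m, hmL, hxm⟩ := Finset.mem_sup.1 hxsup
          have hxA : x ∉ A := (Finset.mem_sdiff.1 hx).2
          have hmA : m ≠ A := fun h => hxA (h ▸ hxm)
          have : x ∈ Bad := Finset.mem_union_left _
            (Finset.mem_biUnion.2 ⟨m, Finset.mem_erase.2 ⟨hmA, hmL⟩, Finset.mem_sdiff.2 ⟨hxm, hxA⟩⟩)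
          exact Finset.disjoint_left.1 hedisj hx this
        · have hXA : X ≠ A := fun h => hA (h ▸ hX')
          rw [Function.update_of_ne hXA]
          exact hg1 X hX'
      · intro X hX Y hY hXY
        rcases Finset.mem_insert.1 hX with hXeq | hX' <;>
          rcases Finset.mem_insert.1 hY with hYeq | hY'
        · exact absurd (hXeq.trans hYeq.symm) hXY
        · have hYA : Y ≠ A := fun h => hA (h ▸ hY')
          rw [hXeq, Function.update_self, Function.update_of_ne hYA]
          refine Finset.disjoint_left.2 fun x hx hxY => ?_
          have : x ∈ Bad := Finset.mem_union_right _ (Finset.mem_biUnion.2 ⟨Y, hY', hxY⟩)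
          exact Finset.disjoint_left.1 hedisj hx this
        · have hXA : X ≠ A := fun h => hA (h ▸ hX')
          rw [hYeq, Function.update_self, Function.update_of_ne hXA]
          refine Finset.disjoint_left.2 fun x hxX hxe => ?_
          have : x ∈ Bad := Finset.mem_union_right _ (Finset.mem_biUnion.2 ⟨X, hX', hxX⟩)
          exact Finset.disjoint_left.1 hedisj hxe this
        · have hXA : X ≠ A := fun h => hA (h ▸ hX')
          have hYA : Y ≠ A := fun h => hA (h ▸ hY')
          rw [Function.update_of_ne hXA, Function.update_of_ne hYA]
          exact hg2 X hX' Y hY' hXY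
  obtain ⟨g, hg1, hg2⟩ := key L Finset.Subset.rfl
  have hinter : ∀ A ∈ L, ∀ B ∈ L, A ≠ B → g A ∩ g B = C := by
    intro A hA B hB hAB
    obtain ⟨hgA, hsubA, hdA⟩ := hg1 A hA
    obtain ⟨hgB, hsubB, hdB⟩ := hg1 B hB
    apply Finset.Subset.antisymm
    · intro x hx
      obtain ⟨hxA, hxB⟩ := Finset.mem_inter.1 hx
      by_cases h1 : x ∈ A
      · by_cases h2 : x ∈ B
        · rw [← hCint A hA B hB hAB]; exact Finset.mem_inter.2 ⟨h1, h2⟩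
        · exact absurd (Finset.mem_sup.2 ⟨A, hA, h1⟩)
            (Finset.disjoint_left.1 hdB (Finset.mem_sdiff.2 ⟨hxB, h2⟩))
      · by_cases h2 : x ∈ B
        · exact absurd (Finset.mem_sup.2 ⟨B, hB, h2⟩)
            (Finset.disjoint_left.1 hdA (Finset.mem_sdiff.2 ⟨hxA, h1⟩))
        · exact absurd (Finset.mem_sdiff.2 ⟨hxB, h2⟩)
            (Finset.disjoint_left.1 (hg2 A hA B hB hAB) (Finset.mem_sdiff.2 ⟨hxA, h1⟩))
    · intro x hx
      exact Finset.mem_inter.2 ⟨hsubA (hCsub A hA hx), hsubB (hCsub B hB hx)⟩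
  have hinj : Set.InjOn g ↑L := by
    intro A hA B hB h
    by_contra hne
    have heq := hinter A hA B hB hne
    rw [h, Finset.inter_self] at heq
    have h1 : (g B).card = t := by rw [heq, hCcard]
    have h2 : (g B).card = r := hunif _ (hg1 B hB).1
    omega
  have hsubH : L.image g ⊆ H := by
    intro e he
    obtain ⟨A, hAmem, rfl⟩ := Finset.mem_image.1 he
    exact (hg1 A hAmem).1
  refine hfree (L.image g) hsubH ⟨?_, ?_, C, hCcard, ?_, ?_⟩
  · rw [Finset.card_image_of_injOn hinj, hLcard]
  · intro e he
    obtain ⟨A, hAmem, rfl⟩ := Finset.mem_image.1 he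
    exact hunif _ (hg1 A hAmem).1
  · intro e he
    obtain ⟨A, hAmem, rfl⟩ := Finset.mem_image.1 he
    exact fun x hx => (hg1 A hAmem).2.1 (hCsub A hAmem hx)
  · intro e he f hf hef
    obtain ⟨A, hAmem, rfl⟩ := Finset.mem_image.1 he
    obtain ⟨B, hBmem, rfl⟩ := Finset.mem_image.1 hf
    exact hinter A hAmem B hBmem fun h => hef (h ▸ rfl)
end

section
/- Let r ≥ 2t+1, n a positive integer, and s = max{k−1, t+1} with s ≤ n/2. Let V = A ∪ B with |A| = n−s, |B| = s, and let H be the r-uniform hypergraph whose edges are all r-sets having exactly r−t−1 vertices in A and exactly t+1 vertices in B. Then H contains no sunflower S(r,t,k). -/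
theorem stmt11 (r t k n s : ℕ) (hr : 2 * t + 1 ≤ r) (hk : 2 ≤ k)
    (hs : s = max (k - 1) (t + 1)) (hsn : 2 * s ≤ n)
    (A B : Finset (Fin n)) (hAB : Disjoint A B) (hUnion : A ∪ B = Finset.univ)
    (hA : A.card = n - s) (hB : B.card = s)
    (P : Finset (Finset (Fin n)))
    (hP : ∀ e ∈ P, (e ∩ A).card = r - t - 1 ∧ (e ∩ B).card = t + 1) :
    ¬ IsSunflower r t k P := by
  rintro ⟨hcard, huni, C, hCt, hCsub, hint⟩
  rcases max_cases (k - 1) (t + 1) with ⟨h1, h2⟩ | ⟨h1, h2⟩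
  · -- s = k - 1, with t + 1 ≤ k - 1
    have hsk : s = k - 1 := hs.trans h1
    have hdisj : ∀ e ∈ P, ∀ f ∈ P, e ≠ f →
        Disjoint ((e ∩ B) \ C) ((f ∩ B) \ C) := by
      intro e he f hf hef
      rw [Finset.disjoint_left]
      intro x hx hx'
      have hxef : x ∈ e ∩ f := Finset.mem_inter.2
        ⟨(Finset.mem_inter.1 (Finset.mem_sdiff.1 hx).1).1,
         (Finset.mem_inter.1 (Finset.mem_sdiff.1 hx').1).1⟩
      rw [hint e he f hf hef] at hxef
      exact (Finset.mem_sdiff.1 hx).2 hxef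
    have hsum : k ≤ (P.biUnion (fun e => (e ∩ B) \ C)).card := by
      rw [Finset.card_biUnion hdisj]
      calc k = ∑ _e ∈ P, 1 := by rw [Finset.sum_const, hcard, smul_eq_mul, mul_one]
        _ ≤ ∑ e ∈ P, ((e ∩ B) \ C).card := by
          apply Finset.sum_le_sum
          intro e he
          have h3 := (hP e he).2
          have h4 := Finset.card_le_card_sdiff_add_card (s := e ∩ B) (t := C)
          omega
    have hsub : P.biUnion (fun e => (e ∩ B) \ C) ⊆ B := by
      intro x hx
      rcases Finset.mem_biUnion.1 hx with ⟨e, _he, hxe⟩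
      exact (Finset.mem_inter.1 (Finset.mem_sdiff.1 hxe).1).2
    have hle := Finset.card_le_card hsub
    rw [hB, hsk] at hle
    omega
  · -- s = t + 1
    have hst : s = t + 1 := hs.trans h1
    obtain ⟨e, he, f, hf, hef⟩ : ∃ e ∈ P, ∃ f ∈ P, e ≠ f :=
      Finset.one_lt_card.1 (by omega)
    have heB : e ∩ B = B := Finset.eq_of_subset_of_card_le
      Finset.inter_subset_right (by rw [(hP e he).2, hB, hst])
    have hfB : f ∩ B = B := Finset.eq_of_subset_of_card_le
      Finset.inter_subset_right (by rw [(hP f hf).2, hB, hst])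
    have hBC : B ⊆ C := by
      rw [← hint e he f hf hef]
      intro x hx
      exact Finset.mem_inter.2
        ⟨(Finset.mem_inter.1 (show x ∈ e ∩ B by rw [heB]; exact hx)).1,
         (Finset.mem_inter.1 (show x ∈ f ∩ B by rw [hfB]; exact hx)).1⟩
    have := Finset.card_le_card hBC
    rw [hB, hCt, hst] at this
    omega
end

section
/- For all fixed r and t with 2t ≥ r > t ≥ 0, there is a constant c = c(r) > 0 such that for all n and all k with 2 ≤ k ≤ n/r², there exists an r-uniform hypergraph on n vertices with at least c · n^t k^{r−t} edges containing no sunflower S(r,t,k). -/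
open Finset

lemma card_filter_superset {α : Type*} [Fintype α] [DecidableEq α] (T : Finset α) (q : ℕ)
    (hq : T.card ≤ q) :
    ((Finset.powersetCard q (Finset.univ : Finset α)).filter (fun V => T ⊆ V)).card
      = (Fintype.card α - T.card).choose (q - T.card) := by
  rw [← Finset.card_compl T, ← Finset.card_powersetCard]
  apply Finset.card_bij' (fun V _ => V \ T) (fun W _ => T ∪ W)
  · intro V hV
    simp only [Finset.mem_filter, Finset.mem_powersetCard] at hV
    rw [Finset.mem_powersetCard]
    exact ⟨fun x hx => by simp_all [Finset.mem_sdiff],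
      by rw [Finset.card_sdiff_of_subset hV.2, hV.1.2]⟩
  · intro W hW
    rw [Finset.mem_powersetCard] at hW
    simp only [Finset.mem_filter, Finset.mem_powersetCard]
    refine ⟨⟨Finset.subset_univ _, ?_⟩, Finset.subset_union_left⟩
    rw [Finset.card_union_of_disjoint, hW.2]
    · omega
    · exact Finset.disjoint_left.2 fun x hx hx2 => by
        have := hW.1 hx2; simp_all
  · intro V hV
    simp only [Finset.mem_filter] at hV
    exact Finset.union_sdiff_of_subset hV.2
  · intro W hW
    rw [Finset.mem_powersetCard] at hW
    apply Finset.union_sdiff_cancel_left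
    exact Finset.disjoint_left.2 fun x hx hx2 => by have := hW.1 hx2; simp_all

lemma greedy_step (n r t s i : ℕ) (hrt : t ≤ r) (hrs : r ≤ s) (hsn : s ≤ n)
    (B : ℕ → Finset (Fin n)) (hB : ∀ j < i, (B j).card = s)
    (hineq : 2 * i * s.choose t * r.choose t ≤ n.choose t) :
    ∃ (V : Finset (Fin n)) (E : Finset (Finset (Fin n))),
      V.card = s ∧ (∀ e ∈ E, e ⊆ V ∧ e.card = r) ∧ s.choose r ≤ 2 * E.card ∧
      (∀ j < i, ∀ e ∈ E, (e ∩ B j).card < t) := by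
  classical
  set Bad : Finset (Finset (Fin n)) :=
    (Finset.powersetCard r (Finset.univ : Finset (Fin n))).filter
      (fun e => ∃ j < i, t ≤ (e ∩ B j).card) with hBadDef
  -- bound on Bad
  have hBadcard : Bad.card ≤ i * (s.choose t * (n - t).choose (r - t)) := by
    have hsub : Bad ⊆ (Finset.range i).biUnion (fun j =>
        ((B j).powersetCard t).biUnion (fun T =>
          (Finset.powersetCard r (Finset.univ : Finset (Fin n))).filter (fun e => T ⊆ e))) := by
      intro e he
      simp only [hBadDef, Finset.mem_filter, Finset.mem_powersetCard] at he
      obtain ⟨⟨heu, hec⟩, j, hj, hjt⟩ := he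
      obtain ⟨T, hTsub, hTcard⟩ := Finset.exists_subset_card_eq hjt
      simp only [Finset.mem_biUnion, Finset.mem_range, Finset.mem_filter,
        Finset.mem_powersetCard]
      exact ⟨j, hj, T, ⟨hTsub.trans Finset.inter_subset_right, hTcard⟩,
        ⟨heu, hec⟩, hTsub.trans Finset.inter_subset_left⟩
    calc Bad.card ≤ _ := Finset.card_le_card hsub
      _ ≤ ∑ j ∈ Finset.range i, (((B j).powersetCard t).biUnion (fun T =>
          (Finset.powersetCard r (Finset.univ : Finset (Fin n))).filter (fun e => T ⊆ e))).card :=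
        Finset.card_biUnion_le
      _ ≤ ∑ j ∈ Finset.range i, (s.choose t * (n - t).choose (r - t)) := by
        apply Finset.sum_le_sum
        intro j hj
        calc _ ≤ ∑ T ∈ (B j).powersetCard t,
            ((Finset.powersetCard r (Finset.univ : Finset (Fin n))).filter
              (fun e => T ⊆ e)).card := Finset.card_biUnion_le
          _ = ∑ T ∈ (B j).powersetCard t, (n - t).choose (r - t) := by
            apply Finset.sum_congr rfl
            intro T hT
            rw [Finset.mem_powersetCard] at hT
            rw [card_filter_superset T r (by rw [hT.2]; exact hrt), hT.2, Fintype.card_fin]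
          _ = (s.choose t) * ((n - t).choose (r - t)) := by
            rw [Finset.sum_const, Finset.card_powersetCard,
              hB j (Finset.mem_range.1 hj), smul_eq_mul]
      _ = i * (s.choose t * (n - t).choose (r - t)) := by
        rw [Finset.sum_const, Finset.card_range, smul_eq_mul]
  -- averaging
  set 𝒱 := Finset.powersetCard s (Finset.univ : Finset (Fin n)) with h𝒱
  have h𝒱card : 𝒱.card = n.choose s := by
    rw [h𝒱, Finset.card_powersetCard, Finset.card_univ, Fintype.card_fin]
  have h𝒱ne : 𝒱.Nonempty := by
    rw [h𝒱, Finset.powersetCard_nonempty, Finset.card_univ, Fintype.card_fin]; exact hsn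
  have hsum : ∑ V ∈ 𝒱, (Bad.filter (fun e => e ⊆ V)).card
      = Bad.card * ((n - r).choose (s - r)) := by
    have : ∀ V, (Bad.filter (fun e => e ⊆ V)).card = ∑ e ∈ Bad, if e ⊆ V then 1 else 0 := by
      intro V; rw [Finset.card_filter]
    simp_rw [this]
    rw [Finset.sum_comm]
    have : ∀ e ∈ Bad, (∑ V ∈ 𝒱, if e ⊆ V then 1 else 0) = (n - r).choose (s - r) := by
      intro e he
      have hec : e.card = r := by
        simp only [hBadDef, Finset.mem_filter, Finset.mem_powersetCard] at he
        exact he.1.2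
      rw [← Finset.card_filter]
      rw [card_filter_superset e s (by rw [hec]; exact hrs), hec, Fintype.card_fin]
    rw [Finset.sum_congr rfl this, Finset.sum_const, smul_eq_mul]
  obtain ⟨V, hV𝒱, hfV⟩ : ∃ V ∈ 𝒱,
      n.choose s * (Bad.filter (fun e => e ⊆ V)).card
        ≤ Bad.card * ((n - r).choose (s - r)) := by
    apply Finset.exists_le_of_sum_le h𝒱ne
    rw [← Finset.mul_sum, hsum, Finset.sum_const, smul_eq_mul, ← h𝒱card]
  set f := (Bad.filter (fun e => e ⊆ V)).card with hf
  -- key inequality : 2 * f ≤ s.choose r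
  have hP : 0 < r.choose t * n.choose s :=
    Nat.mul_pos (Nat.choose_pos hrt) (Nat.choose_pos hsn)
  have h2f : 2 * f ≤ s.choose r := by
    have key : (2 * f) * (r.choose t * n.choose s) ≤ s.choose r * (r.choose t * n.choose s) := by
      calc (2 * f) * (r.choose t * n.choose s)
          = 2 * r.choose t * (n.choose s * f) := by ring
        _ ≤ 2 * r.choose t * (Bad.card * ((n - r).choose (s - r))) :=
            Nat.mul_le_mul_left _ hfV
        _ ≤ 2 * r.choose t * ((i * (s.choose t * (n - t).choose (r - t)))
              * ((n - r).choose (s - r))) := by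
            apply Nat.mul_le_mul_left
            exact Nat.mul_le_mul_right _ hBadcard
        _ = (2 * i * s.choose t * r.choose t) * ((n - t).choose (r - t)
              * (n - r).choose (s - r)) := by ring
        _ ≤ n.choose t * ((n - t).choose (r - t) * (n - r).choose (s - r)) :=
            Nat.mul_le_mul_right _ hineq
        _ = (n.choose t * (n - t).choose (r - t)) * (n - r).choose (s - r) := by ring
        _ = (n.choose r * r.choose t) * (n - r).choose (s - r) := by
            rw [Nat.choose_mul hrt]
        _ = (n.choose s * s.choose r) * r.choose t := by
            rw [Nat.choose_mul hrs]; ring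
        _ = s.choose r * (r.choose t * n.choose s) := by ring
    exact Nat.le_of_mul_le_mul_right key hP
  -- define E
  have hVcard : V.card = s := (Finset.mem_powersetCard.1 hV𝒱).2
  refine ⟨V, Finset.powersetCard r V \ Bad, hVcard, ?_, ?_, ?_⟩
  · intro e he
    rw [Finset.mem_sdiff, Finset.mem_powersetCard] at he
    exact he.1
  · have hinter : Finset.powersetCard r V ∩ Bad = Bad.filter (fun e => e ⊆ V) := by
      ext e
      simp only [Finset.mem_inter, Finset.mem_filter, Finset.mem_powersetCard]
      constructor
      · rintro ⟨⟨h1, _⟩, h2⟩; exact ⟨h2, h1⟩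
      · rintro ⟨h1, h2⟩
        have : e.card = r := by
          simp only [hBadDef, Finset.mem_filter, Finset.mem_powersetCard] at h1
          exact h1.1.2
        exact ⟨⟨h2, this⟩, h1⟩
    have := Finset.card_sdiff_add_card_inter (Finset.powersetCard r V) Bad
    rw [hinter, ← hf, Finset.card_powersetCard, hVcard] at this
    omega
  · intro j hj e he
    rw [Finset.mem_sdiff] at he
    have hein : e ∈ Finset.powersetCard r (Finset.univ : Finset (Fin n)) := by
      rw [Finset.mem_powersetCard] at he ⊢
      exact ⟨Finset.subset_univ _, he.1.2⟩
    by_contra hcon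
    exact he.2 (Finset.mem_filter.2 ⟨hein, j, hj, by omega⟩)

lemma greedy (n r t s m : ℕ) (hrt : t ≤ r) (hrs : r ≤ s) (hsn : s ≤ n)
    (hineq : ∀ i < m, 2 * i * s.choose t * r.choose t ≤ n.choose t) :
    ∃ (B : ℕ → Finset (Fin n)) (E : ℕ → Finset (Finset (Fin n))),
      (∀ j < m, (B j).card = s) ∧
      (∀ j < m, ∀ e ∈ E j, e ⊆ B j ∧ e.card = r) ∧
      (∀ j < m, s.choose r ≤ 2 * (E j).card) ∧
      (∀ j' j, j' < j → j < m → ∀ e ∈ E j, (e ∩ B j').card < t) := by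
  induction m with
  | zero =>
    exact ⟨fun _ => ∅, fun _ => ∅, fun j hj => absurd hj (by omega),
      fun j hj => absurd hj (by omega), fun j hj => absurd hj (by omega),
      fun j' j h1 h2 => absurd h2 (by omega)⟩
  | succ i ih =>
    obtain ⟨B, E, h1, h2, h3, h4⟩ := ih (fun j hj => hineq j (by omega))
    obtain ⟨V, Ev, hV1, hV2, hV3, hV4⟩ :=
      greedy_step n r t s i hrt hrs hsn B h1 (hineq i (by omega))
    refine ⟨Function.update B i V, Function.update E i Ev, ?_, ?_, ?_, ?_⟩
    · intro j hj
      rcases Nat.lt_or_ge j i with h | h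
      · rw [Function.update_of_ne (by omega)]; exact h1 j h
      · have : j = i := by omega
        rw [this, Function.update_self]; exact hV1
    · intro j hj
      rcases Nat.lt_or_ge j i with h | h
      · rw [Function.update_of_ne (by omega), Function.update_of_ne (by omega)]
        exact h2 j h
      · have : j = i := by omega
        rw [this, Function.update_self, Function.update_self]; exact hV2
    · intro j hj
      rcases Nat.lt_or_ge j i with h | h
      · rw [Function.update_of_ne (by omega)]; exact h3 j h
      · have : j = i := by omega
        rw [this, Function.update_self]; exact hV3
    · intro j' j hj' hj e he
      have hj'i : j' < i := by omega
      rw [Function.update_of_ne (by omega)]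
      rcases Nat.lt_or_ge j i with h | h
      · rw [Function.update_of_ne (by omega)] at he
        exact h4 j' j hj' h e he
      · have : j = i := by omega
        rw [this, Function.update_self] at he
        exact hV4 j' hj'i e he

theorem stmt12 (r t : ℕ) (ht : t < r) (h2t : r ≤ 2 * t) :
    ∃ c : ℝ, 0 < c ∧ ∀ n k : ℕ, 2 ≤ k → r ^ 2 * k ≤ n →
      ∃ H : Finset (Finset (Fin n)), (∀ e ∈ H, e.card = r) ∧
        (∀ P ⊆ H, ¬ IsSunflower r t k P) ∧
        c * (n : ℝ) ^ t * (k : ℝ) ^ (r - t) ≤ (H.card : ℝ) := by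
  classical
  have ht1 : 1 ≤ t := by omega
  have hr2 : 2 ≤ r := by omega
  have htR : (1:ℝ) ≤ (t:ℝ) := by exact_mod_cast ht1
  have hrR : (2:ℝ) ≤ (r:ℝ) := by exact_mod_cast hr2
  have hA : (0:ℝ) < (2*(t:ℝ))^t * (2*(r:ℝ))^r * (r:ℝ)^(2*t) * 4 := by
    have h1 : (0:ℝ) < 2*(t:ℝ) := by linarith
    have h2 : (0:ℝ) < 2*(r:ℝ) := by linarith
    have h3 : (0:ℝ) < (r:ℝ) := by linarith
    positivity
  refine ⟨1 / ((2*(t:ℝ))^t * (2*(r:ℝ))^r * (r:ℝ)^(2*t) * 4), by positivity, ?_⟩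
  intro n k hk hn
  -- basic numerology
  set q := (r - t) * k with hqdef
  set s := q + t - 1 with hsdef
  have hq2 : 2 ≤ q := by
    have : 1 * 2 ≤ (r - t) * k := Nat.mul_le_mul (by omega) hk
    omega
  have hqk : k ≤ q := by
    have : 1 * k ≤ (r - t) * k := Nat.mul_le_mul_right k (by omega)
    omega
  have hq2rt : 2 * (r - t) ≤ q := by
    have : (r - t) * 2 ≤ (r - t) * k := Nat.mul_le_mul_left (r - t) hk
    omega
  have hrs : r ≤ s := by omega
  have hts : t ≤ s := by omega
  have hqtrk : q + t ≤ r * k := by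
    have h1 : (r - t) * k + t * k = r * k := by
      rw [← Nat.add_mul]; congr 1; omega
    have h2 : t ≤ t * k := Nat.le_mul_of_pos_right t (by omega)
    omega
  have hrrk : r * k ≤ n := by
    have h1 : 1 * (r * k) ≤ r * (r * k) := Nat.mul_le_mul_right (r * k) (by omega)
    have h2 : r * (r * k) = r ^ 2 * k := by ring
    omega
  have hsrk : s + 1 ≤ r * k := by omega
  have hsn : s ≤ n := by omega
  have h2tn : 2 * t ≤ n := by
    have h1 : 2 * r ≤ r * r := Nat.mul_le_mul_right r hr2
    have h2 : r * r * 1 ≤ r * r * k := Nat.mul_le_mul_left (r * r) (by omega)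
    have h3 : r * r * k = r ^ 2 * k := by ring
    omega
  -- the number of blocks
  set D := 2 * s.choose t * r.choose t with hDdef
  have hD : 0 < D := by
    have h1 := Nat.choose_pos hts
    have h2 := Nat.choose_pos ht.le
    positivity
  set m := n.choose t / D + 1 with hmdef
  have hml : ∀ i < m, 2 * i * s.choose t * r.choose t ≤ n.choose t := by
    intro i hi
    have h1 : i ≤ n.choose t / D := by omega
    have h2 : i * D ≤ n.choose t := (Nat.le_div_iff_mul_le hD).1 h1
    calc 2 * i * s.choose t * r.choose t = i * D := by rw [hDdef]; ring
      _ ≤ n.choose t := h2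
  have hmu : n.choose t < m * D := by
    have h1 := Nat.lt_div_mul_add (a := n.choose t) hD
    have h2 : m * D = n.choose t / D * D + D := by rw [hmdef]; ring
    omega
  -- run the greedy construction
  obtain ⟨B, E, hB1, hB2, hB3, hB4⟩ := greedy n r t s m ht.le hrs hsn hml
  set H := (Finset.range m).biUnion E with hHdef
  have hHr : ∀ e ∈ H, e.card = r := by
    intro e he
    obtain ⟨j, hj, hje⟩ := Finset.mem_biUnion.1 he
    exact (hB2 j (Finset.mem_range.1 hj) e hje).2
  -- disjointness of the E j
  have hdisj' : ∀ j' j, j' < j → j < m → Disjoint (E j') (E j) := by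
    intro j' j hj' hj
    rw [Finset.disjoint_left]
    intro e he' he
    have h1 := hB4 j' j hj' hj e he
    have h2 : e ∩ B j' = e := Finset.inter_eq_left.2 (hB2 j' (by omega) e he').1
    rw [h2, (hB2 j' (by omega) e he').2] at h1
    omega
  have hHcard : m * s.choose r ≤ 2 * H.card := by
    rw [hHdef, Finset.card_biUnion (by
      intro x hx y hy hxy
      rcases Nat.lt_or_ge x y with h | h
      · exact hdisj' x y h (Finset.mem_range.1 hy)
      · exact (hdisj' y x (by omega) (Finset.mem_range.1 hx)).symm)]
    rw [Finset.mul_sum]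
    calc m * s.choose r = ∑ _j ∈ Finset.range m, s.choose r := by
          rw [Finset.sum_const, Finset.card_range, smul_eq_mul]
      _ ≤ ∑ j ∈ Finset.range m, 2 * (E j).card :=
          Finset.sum_le_sum fun j hj => hB3 j (Finset.mem_range.1 hj)
  refine ⟨H, hHr, ?_, ?_⟩
  · -- no sunflower
    rintro P hPH ⟨hPcard, hPr, C, hCcard, hCsub, hCint⟩
    have hPne : P.Nonempty := by rw [← Finset.card_pos, hPcard]; omega
    have hidx : ∀ e ∈ P, ∃ j, j < m ∧ e ∈ E j := by
      intro e he
      obtain ⟨j, hj, hje⟩ := Finset.mem_biUnion.1 (hPH he)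
      exact ⟨j, Finset.mem_range.1 hj, hje⟩
    choose idx hidx1 hidx2 using hidx
    obtain ⟨e₀, he₀⟩ := hPne
    set j₀ := idx e₀ he₀ with hj₀
    have hsame : ∀ e (he : e ∈ P), idx e he = j₀ := by
      intro e he
      by_contra hne
      have key : ∀ f g (hf : f ∈ P) (hg : g ∈ P), idx f hf < idx g hg → False := by
        intro f g hf hg hlt
        have h1 := hB4 (idx f hf) (idx g hg) hlt (hidx1 g hg) g (hidx2 g hg)
        have h2 : C ⊆ g ∩ B (idx f hf) :=
          Finset.subset_inter (hCsub g hg)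
            ((hCsub f hf).trans (hB2 _ (hidx1 f hf) f (hidx2 f hf)).1)
        have h3 := Finset.card_le_card h2
        rw [hCcard] at h3
        omega
      rcases Nat.lt_or_ge (idx e he) j₀ with h | h
      · exact key e e₀ he he₀ h
      · exact key e₀ e he₀ he (by omega)
    have hsubB : ∀ e ∈ P, e ⊆ B j₀ := by
      intro e he
      have h1 := (hB2 (idx e he) (hidx1 e he) e (hidx2 e he)).1
      rwa [hsame e he] at h1
    -- count the vertices of the sunflower inside B j₀
    have hdisjC : Disjoint C (P.biUnion (fun e => e \ C)) := by
      rw [Finset.disjoint_biUnion_right]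
      intro e he
      exact Finset.disjoint_sdiff
    have hpet : ∀ e ∈ P, ∀ f ∈ P, e ≠ f → Disjoint (e \ C) (f \ C) := by
      intro e he f hf hef
      rw [Finset.disjoint_left]
      intro x hxe hxf
      rw [Finset.mem_sdiff] at hxe hxf
      have : x ∈ e ∩ f := Finset.mem_inter.2 ⟨hxe.1, hxf.1⟩
      rw [hCint e he f hf hef] at this
      exact hxe.2 this
    have hcard1 : (C ∪ P.biUnion (fun e => e \ C)).card = t + k * (r - t) := by
      rw [Finset.card_union_of_disjoint hdisjC, Finset.card_biUnion hpet, hCcard]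
      congr 1
      calc ∑ e ∈ P, (e \ C).card = ∑ e ∈ P, (r - t) := by
            apply Finset.sum_congr rfl
            intro e he
            rw [Finset.card_sdiff_of_subset (hCsub e he), hPr e he, hCcard]
        _ = k * (r - t) := by rw [Finset.sum_const, hPcard, smul_eq_mul]
    have hsubU : C ∪ P.biUnion (fun e => e \ C) ⊆ B j₀ := by
      apply Finset.union_subset ((hCsub e₀ he₀).trans (hsubB e₀ he₀))
      exact Finset.biUnion_subset.2 fun e he => Finset.sdiff_subset.trans (hsubB e he)
    have hle := Finset.card_le_card hsubU
    rw [hcard1, hB1 j₀ (hidx1 e₀ he₀)] at hle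
    have hmc : k * (r - t) = q := by rw [hqdef]; ring
    omega
  · -- the counting
    have hn1 : (n:ℝ)^t ≤ (n.choose t : ℝ) * (2*(t:ℝ))^t := by
      have p1 := Nat.pow_le_choose t n (α := ℝ)
      have p2 : ((n + 1 - t : ℕ) ^ t : ℝ) ≤ (n.choose t : ℝ) * (t:ℝ)^t := by
        rw [div_le_iff₀ (by positivity : (0:ℝ) < ((t.factorial : ℕ) : ℝ))] at p1
        calc ((n + 1 - t : ℕ) ^ t : ℝ) ≤ (n.choose t : ℝ) * ((t.factorial : ℕ) : ℝ) := p1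
          _ ≤ (n.choose t : ℝ) * (t:ℝ)^t := by
              gcongr
              exact_mod_cast Nat.factorial_le_pow t
      have p3 : (n:ℝ) ≤ 2 * ((n + 1 - t : ℕ) : ℝ) := by
        have : n ≤ 2 * (n + 1 - t) := by omega
        exact_mod_cast this
      calc (n:ℝ)^t ≤ (2 * ((n + 1 - t : ℕ) : ℝ))^t := by gcongr
        _ = 2^t * ((n + 1 - t : ℕ) : ℝ)^t := by rw [mul_pow]
        _ = 2^t * (((n + 1 - t : ℕ) ^ t : ℕ) : ℝ) := by push_cast; ring
        _ ≤ 2^t * ((n.choose t : ℝ) * (t:ℝ)^t) := by gcongr; exact_mod_cast p2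
        _ = (n.choose t : ℝ) * (2*(t:ℝ))^t := by rw [mul_pow]; ring
    have hk1 : (k:ℝ)^r ≤ (s.choose r : ℝ) * (2*(r:ℝ))^r := by
      have p1 := Nat.pow_le_choose r s (α := ℝ)
      have p2 : ((s + 1 - r : ℕ) ^ r : ℝ) ≤ (s.choose r : ℝ) * (r:ℝ)^r := by
        rw [div_le_iff₀ (by positivity : (0:ℝ) < ((r.factorial : ℕ) : ℝ))] at p1
        calc ((s + 1 - r : ℕ) ^ r : ℝ) ≤ (s.choose r : ℝ) * ((r.factorial : ℕ) : ℝ) := p1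
          _ ≤ (s.choose r : ℝ) * (r:ℝ)^r := by
              gcongr
              exact_mod_cast Nat.factorial_le_pow r
      have hk2 : k ≤ 2 * (s + 1 - r) := by
        have h1 : (r - t) * (k - 1) + (r - t) = q := by
          rw [hqdef, ← Nat.mul_succ]; congr 1; omega
        have h2 : k - 1 ≤ (r - t) * (k - 1) := Nat.le_mul_of_pos_left (k - 1) (by omega)
        omega
      have p3 : (k:ℝ) ≤ 2 * ((s + 1 - r : ℕ) : ℝ) := by exact_mod_cast hk2
      calc (k:ℝ)^r ≤ (2 * ((s + 1 - r : ℕ) : ℝ))^r := by gcongr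
        _ = 2^r * ((s + 1 - r : ℕ) : ℝ)^r := by rw [mul_pow]
        _ = 2^r * (((s + 1 - r : ℕ) ^ r : ℕ) : ℝ) := by push_cast; ring
        _ ≤ 2^r * ((s.choose r : ℝ) * (r:ℝ)^r) := by gcongr; exact_mod_cast p2
        _ = (s.choose r : ℝ) * (2*(r:ℝ))^r := by rw [mul_pow]; ring
    have hD1 : (D:ℝ) ≤ 2 * ((r*k : ℕ):ℝ)^t * (r:ℝ)^t := by
      have h1 : s.choose t ≤ (r*k)^t :=
        le_trans (Nat.choose_le_pow s t) (Nat.pow_le_pow_left (by omega) t)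
      have h2 : r.choose t ≤ r^t := Nat.choose_le_pow r t
      have h3 : D ≤ 2 * (r*k)^t * r^t := by
        rw [hDdef]
        exact Nat.mul_le_mul (Nat.mul_le_mul_left 2 h1) h2
      exact_mod_cast h3
    have hm1 : (n.choose t : ℝ) ≤ (m:ℝ) * (D:ℝ) := by exact_mod_cast hmu.le
    have hH1 : (m:ℝ) * (s.choose r : ℝ) ≤ 2 * (H.card : ℝ) := by exact_mod_cast hHcard
    have hktpos : (0:ℝ) < (k:ℝ)^t := by
      have : (0:ℝ) < (k:ℝ) := by exact_mod_cast (by omega : 0 < k)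
      positivity
    rw [div_mul_eq_mul_div, div_mul_eq_mul_div, one_mul, div_le_iff₀ hA]
    apply le_of_mul_le_mul_right _ hktpos
    have hrt' : r - t + t = r := by omega
    calc (n:ℝ)^t * (k:ℝ)^(r-t) * (k:ℝ)^t = (n:ℝ)^t * (k:ℝ)^r := by
          rw [mul_assoc, ← pow_add, hrt']
      _ ≤ ((n.choose t : ℝ) * (2*(t:ℝ))^t) * ((s.choose r : ℝ) * (2*(r:ℝ))^r) := by
          apply mul_le_mul hn1 hk1 (by positivity) (by positivity)
      _ = ((n.choose t : ℝ) * (s.choose r : ℝ)) * ((2*(t:ℝ))^t * (2*(r:ℝ))^r) := by ring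
      _ ≤ (((m:ℝ) * (D:ℝ)) * (s.choose r : ℝ)) * ((2*(t:ℝ))^t * (2*(r:ℝ))^r) :=
          mul_le_mul_of_nonneg_right
            (mul_le_mul_of_nonneg_right hm1 (Nat.cast_nonneg _))
            (by positivity)
      _ = (((m:ℝ) * (s.choose r : ℝ)) * (D:ℝ)) * ((2*(t:ℝ))^t * (2*(r:ℝ))^r) := by ring
      _ ≤ ((2 * (H.card : ℝ)) * (2 * ((r*k : ℕ):ℝ)^t * (r:ℝ)^t)) *
            ((2*(t:ℝ))^t * (2*(r:ℝ))^r) := by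
          apply mul_le_mul_of_nonneg_right _ (by positivity)
          exact mul_le_mul hH1 hD1 (Nat.cast_nonneg _)
            (mul_nonneg (by norm_num) (Nat.cast_nonneg _))
      _ = (H.card : ℝ) * ((2*(t:ℝ))^t * (2*(r:ℝ))^r * (r:ℝ)^(2*t) * 4) * (k:ℝ)^t := by
          push_cast
          ring
end

section
/- Suppose V_1, …, V_m are vertex subsets each of size at most s = (r−t)k+t−1, and S_1, …, S_m are families of r-element edges with S_i using only vertices of V_i, such that no edge in any S_i has t or more vertices in any V_j with j ≠ i. Then the hypergraph H with edge set S_1 ∪ … ∪ S_m contains no sunflower S(r,t,k). -/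
theorem stmt13 {V : Type*} [DecidableEq V] (r t k m : ℕ) (ht : t < r) (hk : 1 ≤ k)
    (Vs : Fin m → Finset V) (Ss : Fin m → Finset (Finset V))
    (hVs : ∀ i, (Vs i).card ≤ (r - t) * k + t - 1)
    (hedge : ∀ i, ∀ e ∈ Ss i, e.card = r ∧ e ⊆ Vs i)
    (hcross : ∀ i j, i ≠ j → ∀ e ∈ Ss i, (e ∩ Vs j).card < t) :
    ∀ P ⊆ Finset.univ.biUnion Ss, ¬ IsSunflower r t k P := by
  rintro P hP ⟨hcard, hr, C, hC, hCsub, hinter⟩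
  -- P is nonempty
  have hPne : P.Nonempty := by
    rw [← Finset.card_pos, hcard]; exact hk
  obtain ⟨e₀, he₀⟩ := hPne
  obtain ⟨i, _, hi⟩ := Finset.mem_biUnion.1 (hP he₀)
  -- every edge of P is in Ss i
  have hall : ∀ e ∈ P, e ∈ Ss i := by
    intro e he
    obtain ⟨j, _, hj⟩ := Finset.mem_biUnion.1 (hP he)
    by_cases hij : j = i
    · exact hij ▸ hj
    · exfalso
      have hCe : C ⊆ e ∩ Vs i := by
        intro x hx
        exact Finset.mem_inter.2 ⟨hCsub e he hx, (hedge i e₀ hi).2 (hCsub e₀ he₀ hx)⟩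
      have := Finset.card_le_card hCe
      have := hcross j i hij e hj
      omega
  -- union of P is inside Vs i
  have hsub : P.biUnion id ⊆ Vs i := by
    intro x hx
    obtain ⟨e, he, hxe⟩ := Finset.mem_biUnion.1 hx
    exact (hedge i e (hall e he)).2 hxe
  -- the petals e \ C are pairwise disjoint
  have hdisj : ∀ e ∈ P, ∀ f ∈ P, e ≠ f → Disjoint (e \ C) (f \ C) := by
    intro e he f hf hef
    rw [Finset.disjoint_left]
    intro x hxe hxf
    have hx : x ∈ e ∩ f := Finset.mem_inter.2 ⟨(Finset.mem_sdiff.1 hxe).1,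
      (Finset.mem_sdiff.1 hxf).1⟩
    rw [hinter e he f hf hef] at hx
    exact (Finset.mem_sdiff.1 hxe).2 hx
  have hbu : (P.biUnion (· \ C)).card = k * (r - t) := by
    rw [Finset.card_biUnion hdisj]
    rw [Finset.sum_congr rfl (fun e he => by
      rw [Finset.card_sdiff_of_subset (hCsub e he), hr e he, hC])]
    simp [hcard, Finset.sum_const, mul_comm]
  -- C is disjoint from the petals union
  have hdisjC : Disjoint C (P.biUnion (· \ C)) := by
    rw [Finset.disjoint_right]
    intro x hx hxC
    obtain ⟨e, _, hxe⟩ := Finset.mem_biUnion.1 hx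
    exact (Finset.mem_sdiff.1 hxe).2 hxC
  have hsub2 : C ∪ P.biUnion (· \ C) ⊆ P.biUnion id := by
    intro x hx
    rcases Finset.mem_union.1 hx with h | h
    · exact Finset.mem_biUnion.2 ⟨e₀, he₀, hCsub e₀ he₀ h⟩
    · obtain ⟨e, he, hxe⟩ := Finset.mem_biUnion.1 h
      exact Finset.mem_biUnion.2 ⟨e, he, (Finset.mem_sdiff.1 hxe).1⟩
  have hcard2 : (C ∪ P.biUnion (· \ C)).card = t + k * (r - t) := by
    rw [Finset.card_union_of_disjoint hdisjC, hC, hbu]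
  have h1 : t + k * (r - t) ≤ (Vs i).card :=
    hcard2 ▸ Finset.card_le_card (hsub2.trans hsub)
  have h2 := hVs i
  have h3 : k * (r - t) = (r - t) * k := mul_comm _ _
  have h4 : 1 ≤ k * (r - t) := Nat.one_le_iff_ne_zero.2 (by
    have : 1 ≤ r - t := by omega
    positivity)
  omega
end

section
/- Every family of more than (k−1)^r · r! sets, each of size r, contains a sunflower with k petals, i.e., k sets whose pairwise intersections all equal the intersection of all k of them. -/
open Finset

private lemma sunflower_aux {α : Type*} [DecidableEq α] (k : ℕ) :
    ∀ r : ℕ, ∀ F : Finset (Finset α),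
    (∀ e ∈ F, e.card = r) → (k - 1) ^ r * Nat.factorial r < F.card →
    ∃ P ⊆ F, P.card = k ∧ ∃ C : Finset α, (∀ A ∈ P, C ⊆ A) ∧
      ∀ A ∈ P, ∀ B ∈ P, A ≠ B → A ∩ B = C := by
  classical
  intro r
  induction r with
  | zero =>
    intro F hunif hcard
    simp only [pow_zero, Nat.factorial_zero, one_mul] at hcard
    -- F ⊆ {∅}, so F.card ≤ 1, contradiction
    have hsub : F ⊆ {(∅ : Finset α)} := by
      intro e he
      simp [Finset.card_eq_zero.mp (hunif e he)]
    have := Finset.card_le_card hsub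
    simp at this
    omega
  | succ r ih =>
    intro F hunif hcard
    rcases Nat.eq_zero_or_pos k with hk | hk
    · subst hk
      refine ⟨∅, by simp, by simp, ∅, by simp, by simp⟩
    -- pick a pairwise-disjoint subfamily D of maximal cardinality
    set T : Finset (Finset (Finset α)) :=
      F.powerset.filter (fun D => ∀ A ∈ D, ∀ B ∈ D, A ≠ B → A ∩ B = ∅) with hT
    have hTne : T.Nonempty := ⟨∅, by simp [hT]⟩
    obtain ⟨D, hDT, hDmax⟩ := T.exists_max_image Finset.card hTne
    have hDF : D ⊆ F := Finset.mem_powerset.mp (Finset.mem_filter.mp hDT).1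
    have hDdisj : ∀ A ∈ D, ∀ B ∈ D, A ≠ B → A ∩ B = ∅ :=
      (Finset.mem_filter.mp hDT).2
    rcases le_or_gt k D.card with hkD | hkD
    · -- k pairwise disjoint sets: sunflower with empty core
      obtain ⟨P, hPD, hPcard⟩ := Finset.exists_subset_card_eq hkD
      exact ⟨P, hPD.trans hDF, hPcard, ∅, fun A _ => Finset.empty_subset A,
        fun A hA B hB hne => hDdisj A (hPD hA) B (hPD hB) hne⟩
    · -- D.card ≤ k - 1
      have hDk : D.card ≤ k - 1 := by omega
      set S : Finset α := D.biUnion id with hS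
      have hScard : S.card ≤ (k - 1) * (r + 1) := by
        calc S.card ≤ ∑ A ∈ D, A.card := Finset.card_biUnion_le
          _ = ∑ A ∈ D, (r + 1) := by
              apply Finset.sum_congr rfl; intro A hA; exact hunif A (hDF hA)
          _ = D.card * (r + 1) := by rw [Finset.sum_const, smul_eq_mul]
          _ ≤ (k - 1) * (r + 1) := Nat.mul_le_mul_right _ hDk
      -- every member of F meets S
      have hmeet : ∀ A ∈ F, (A ∩ S).Nonempty := by
        intro A hA
        have hAne : A.Nonempty := Finset.card_pos.mp (by rw [hunif A hA]; omega)
        by_cases hAD : A ∈ D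
        · have : A ⊆ S := fun x hx => Finset.mem_biUnion.mpr ⟨A, hAD, hx⟩
          rw [Finset.inter_eq_left.mpr this]; exact hAne
        · by_contra hcon
          rw [Finset.not_nonempty_iff_eq_empty] at hcon
          have hins : insert A D ∈ T := by
            rw [hT, Finset.mem_filter, Finset.mem_powerset]
            constructor
            · exact Finset.insert_subset hA hDF
            · intro X hX Y hY hXY
              have hdisjS : ∀ B ∈ D, A ∩ B = ∅ := by
                intro B hB
                have hBS : B ⊆ S := fun x hx => Finset.mem_biUnion.mpr ⟨B, hB, hx⟩
                have : A ∩ B ⊆ A ∩ S := Finset.inter_subset_inter Finset.Subset.rfl hBS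
                rw [hcon] at this
                exact Finset.subset_empty.mp this
              rcases Finset.mem_insert.mp hX with hX' | hX' <;>
                rcases Finset.mem_insert.mp hY with hY' | hY'
              · exact absurd (hX'.trans hY'.symm) hXY
              · subst hX'; exact hdisjS Y hY'
              · subst hY'; rw [Finset.inter_comm]; exact hdisjS X hX'
              · exact hDdisj X hX' Y hY' hXY
          have := hDmax _ hins
          rw [Finset.card_insert_of_notMem hAD] at this
          omega
      -- pigeonhole: some x lies in many sets
      have hFsum : F.card ≤ ∑ x ∈ S, (F.filter (fun A => x ∈ A)).card := by
        have hsub : F ⊆ S.biUnion (fun x => F.filter (fun A => x ∈ A)) := by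
          intro A hA
          obtain ⟨x, hx⟩ := hmeet A hA
          rw [Finset.mem_inter] at hx
          exact Finset.mem_biUnion.mpr ⟨x, hx.2, Finset.mem_filter.mpr ⟨hA, hx.1⟩⟩
        exact (Finset.card_le_card hsub).trans Finset.card_biUnion_le
      have hx : ∃ x ∈ S, (k - 1) ^ r * Nat.factorial r <
          (F.filter (fun A => x ∈ A)).card := by
        by_contra hcon
        push_neg at hcon
        have : F.card ≤ S.card * ((k - 1) ^ r * Nat.factorial r) := by
          calc F.card ≤ ∑ x ∈ S, (F.filter (fun A => x ∈ A)).card := hFsum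
            _ ≤ ∑ x ∈ S, (k - 1) ^ r * Nat.factorial r :=
                Finset.sum_le_sum hcon
            _ = S.card * ((k - 1) ^ r * Nat.factorial r) := by
                rw [Finset.sum_const, smul_eq_mul]
        have hle : S.card * ((k - 1) ^ r * Nat.factorial r) ≤
            (k - 1) ^ (r + 1) * Nat.factorial (r + 1) := by
          calc S.card * ((k - 1) ^ r * Nat.factorial r)
              ≤ ((k - 1) * (r + 1)) * ((k - 1) ^ r * Nat.factorial r) :=
                Nat.mul_le_mul_right _ hScard
            _ = (k - 1) ^ (r + 1) * Nat.factorial (r + 1) := by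
                rw [pow_succ, Nat.factorial_succ]; ring
        omega
      obtain ⟨x, _, hxmany⟩ := hx
      -- pass to the link of x
      set Fx : Finset (Finset α) := F.filter (fun A => x ∈ A) with hFx
      set F' : Finset (Finset α) := Fx.image (fun A => A.erase x) with hF'
      have hinj : Set.InjOn (fun A => A.erase x) (Fx : Set (Finset α)) := by
        intro A hA B hB hAB
        have hxA : x ∈ A := (Finset.mem_filter.mp hA).2
        have hxB : x ∈ B := (Finset.mem_filter.mp hB).2
        rw [← Finset.insert_erase hxA, ← Finset.insert_erase hxB]
        exact congrArg (insert x) hAB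
      have hF'card : (k - 1) ^ r * Nat.factorial r < F'.card := by
        rw [hF', Finset.card_image_of_injOn hinj]; exact hxmany
      have hF'unif : ∀ e ∈ F', e.card = r := by
        intro e he
        obtain ⟨A, hA, rfl⟩ := Finset.mem_image.mp he
        rw [Finset.card_erase_of_mem (Finset.mem_filter.mp hA).2,
          hunif A (Finset.mem_filter.mp hA).1]
        omega
      obtain ⟨P', hP'F', hP'card, C', hC'sub, hC'int⟩ := ih F' hF'unif hF'card
      -- reinsert x
      have hxnot : ∀ e ∈ P', x ∉ e := by
        intro e he
        obtain ⟨A, _, rfl⟩ := Finset.mem_image.mp (hP'F' he)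
        exact Finset.notMem_erase x A
      have hinj2 : Set.InjOn (fun e => insert x e) (P' : Set (Finset α)) := by
        intro a ha b hb hab
        have : (insert x a).erase x = (insert x b).erase x :=
          congrArg (fun s => s.erase x) hab
        rwa [Finset.erase_insert (hxnot a ha), Finset.erase_insert (hxnot b hb)] at this
      refine ⟨P'.image (fun e => insert x e), ?_, ?_, insert x C', ?_, ?_⟩
      · intro A hA
        obtain ⟨e, he, rfl⟩ := Finset.mem_image.mp hA
        obtain ⟨B, hB, rfl⟩ := Finset.mem_image.mp (hP'F' he)
        rw [Finset.insert_erase (Finset.mem_filter.mp hB).2]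
        exact (Finset.mem_filter.mp hB).1
      · rw [Finset.card_image_of_injOn hinj2, hP'card]
      · intro A hA
        obtain ⟨e, he, rfl⟩ := Finset.mem_image.mp hA
        exact Finset.insert_subset_insert x (hC'sub e he)
      · intro A hA B hB hne
        obtain ⟨a, ha, rfl⟩ := Finset.mem_image.mp hA
        obtain ⟨b, hb, rfl⟩ := Finset.mem_image.mp hB
        have hab : a ≠ b := fun h => hne (by rw [h])
        rw [← Finset.insert_inter_distrib, hC'int a ha b hb hab]

theorem stmt15 {α : Type*} [DecidableEq α] (r k : ℕ) (F : Finset (Finset α))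
    (hunif : ∀ e ∈ F, e.card = r)
    (hcard : (k - 1) ^ r * Nat.factorial r < F.card) :
    ∃ P ⊆ F, P.card = k ∧ ∃ C : Finset α, (∀ A ∈ P, C ⊆ A) ∧
      ∀ A ∈ P, ∀ B ∈ P, A ≠ B → A ∩ B = C := by
  exact sunflower_aux k r F hunif hcard
end

section
/- For fixed r > t ≥ 0 with t ≤ (r−1)/2, assuming the upper bound ex(n, S(2t'+1, t', k)) = O(n^{t'} k^{t'+1}) holds in the balanced case for all t' ≤ t, and inductively for smaller uniformities: if an r-uniform hypergraph H on n vertices (with k ≤ n) has more than C·n^{r−t−1} k^{t+1} edges for a sufficiently large constant C = C(r), then H contains a sunflower S(r,t,k). -/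
namespace SunAux

open Finset

variable {n : ℕ}

/-- number of members of `K` containing `D` -/
def deg (K : Finset (Finset (Fin n))) (D : Finset (Fin n)) : ℕ :=
  (K.filter (fun e => D ⊆ e)).card

lemma deg_mono {K K' : Finset (Finset (Fin n))} (hKK : K ⊆ K') (D : Finset (Fin n)) :
    deg K D ≤ deg K' D :=
  card_le_card (filter_subset_filter _ hKK)

lemma one_le_deg {K : Finset (Finset (Fin n))} {D e : Finset (Fin n)} (he : e ∈ K)
    (hDe : D ⊆ e) : 1 ≤ deg K D := by
  have : e ∈ K.filter (fun e => D ⊆ e) := mem_filter.2 ⟨he, hDe⟩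
  exact card_pos.2 ⟨e, this⟩

lemma deg_top {r : ℕ} (K : Finset (Finset (Fin n))) (hU : ∀ e ∈ K, e.card = r)
    (D : Finset (Fin n)) (hD : r ≤ D.card) : deg K D ≤ 1 := by
  rw [deg, card_le_one]
  intro a ha b hb
  simp only [mem_filter] at ha hb
  have ha2 : D = a := eq_of_subset_of_card_le ha.2 (by rw [hU a ha.1]; exact hD)
  have hb2 : D = b := eq_of_subset_of_card_le hb.2 (by rw [hU b hb.1]; exact hD)
  rw [← ha2, ← hb2]

lemma deg_le_children {r : ℕ} (K : Finset (Finset (Fin n))) (hU : ∀ e ∈ K, e.card = r)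
    (D : Finset (Fin n)) (hD : D.card < r) (Λ : ℕ)
    (hcap : ∀ x : Fin n, x ∉ D → deg K (insert x D) ≤ Λ) :
    deg K D ≤ n * Λ := by
  have hsub : K.filter (fun e => D ⊆ e) ⊆
      (Finset.univ \ D).biUnion (fun x => K.filter (fun e => insert x D ⊆ e)) := by
    intro e he
    simp only [mem_filter] at he
    have hne : (e \ D).Nonempty := by
      apply card_pos.1
      rw [card_sdiff_of_subset he.2, hU e he.1]
      omega
    obtain ⟨x, hx⟩ := hne
    rw [mem_sdiff] at hx
    refine mem_biUnion.2 ⟨x, by simp [hx.2], ?_⟩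
    exact mem_filter.2 ⟨he.1, insert_subset hx.1 he.2⟩
  calc deg K D ≤ ((Finset.univ \ D).biUnion
        (fun x => K.filter (fun e => insert x D ⊆ e))).card := card_le_card hsub
    _ ≤ ∑ x ∈ Finset.univ \ D, deg K (insert x D) := card_biUnion_le
    _ ≤ ∑ _x ∈ Finset.univ \ D, Λ :=
        sum_le_sum (fun x hx => hcap x (mem_sdiff.1 hx).2)
    _ = (Finset.univ \ D).card * Λ := by rw [sum_const, smul_eq_mul]
    _ ≤ n * Λ := by
        refine Nat.mul_le_mul_right _ ?_
        calc (Finset.univ \ D).card ≤ (Finset.univ : Finset (Fin n)).card :=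
              card_le_card (sdiff_subset)
          _ = n := by simp

lemma exists_extension (K : Finset (Finset (Fin n)))
    (D B : Finset (Fin n)) (Λ : ℕ)
    (hcap : ∀ v : Fin n, v ∉ D → deg K (insert v D) ≤ Λ)
    (hbig : B.card * Λ < deg K D) :
    ∃ e ∈ K, D ⊆ e ∧ e ∩ B ⊆ D := by
  by_contra hcon
  push_neg at hcon
  have hsub : K.filter (fun e => D ⊆ e) ⊆
      (B \ D).biUnion (fun v => K.filter (fun e => insert v D ⊆ e)) := by
    intro e he
    simp only [mem_filter] at he
    have h3 := hcon e he.1 he.2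
    have hex : ∃ v, v ∈ e ∩ B ∧ v ∉ D := by
      by_contra h4
      push_neg at h4
      exact h3 (fun v hv => h4 v hv)
    obtain ⟨v, hv1, hv2⟩ := hex
    rw [mem_inter] at hv1
    exact mem_biUnion.2 ⟨v, mem_sdiff.2 ⟨hv1.2, hv2⟩,
      mem_filter.2 ⟨he.1, insert_subset hv1.1 he.2⟩⟩
  have h5 : deg K D ≤ (B \ D).card * Λ := by
    calc deg K D ≤ _ := card_le_card hsub
      _ ≤ ∑ v ∈ B \ D, deg K (insert v D) := card_biUnion_le
      _ ≤ ∑ _v ∈ B \ D, Λ := sum_le_sum (fun v hv => hcap v (mem_sdiff.1 hv).2)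
      _ = (B \ D).card * Λ := by rw [sum_const, smul_eq_mul]
  have h6 : (B \ D).card * Λ ≤ B.card * Λ :=
    Nat.mul_le_mul_right _ (card_le_card sdiff_subset)
  omega

end SunAux

namespace SunAux

open Finset

variable {n : ℕ}

/-- Greedy extension of a family of heavy "petal bases" to a full sunflower. -/
lemma greedy {r t k j Λ : ℕ} (K : Finset (Finset (Fin n)))
    (hU : ∀ e ∈ K, e.card = r)
    (htj : t < j)
    (hcap : ∀ D : Finset (Fin n), D.card = j + 1 → deg K D ≤ Λ)
    (C0 : Finset (Fin n)) (hC0 : C0.card = t)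
    (PS : Finset (Finset (Fin n))) (hPSk : PS.card = k)
    (hPSj : ∀ D ∈ PS, D.card = j) (hPSC : ∀ D ∈ PS, C0 ⊆ D)
    (hpair : ∀ D ∈ PS, ∀ D' ∈ PS, D ≠ D' → D ∩ D' = C0)
    (hheavy : ∀ D ∈ PS, 2 * k * r * Λ < deg K D) :
    ∃ P ⊆ K, IsSunflower r t k P := by
  -- if two petals are nested, they are equal
  have hnest : ∀ D ∈ PS, ∀ D' ∈ PS, D ⊆ D' → D = D' := by
    intro D hD D' hD' hsub
    by_contra hne
    have h1 : D ∩ D' = C0 := hpair D hD D' hD' hne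
    have h2 : D ∩ D' = D := inter_eq_left.2 hsub
    have := hPSj D hD
    rw [h2] at h1
    rw [h1] at this
    omega
  -- every petal has card ≤ r : since deg K D ≥ 1 gives an edge ⊇ D
  have hjr : ∀ D ∈ PS, D.card ≤ r := by
    intro D hD
    have h1 : 0 < deg K D := by
      have := hheavy D hD; omega
    obtain ⟨e, he⟩ := card_pos.1 h1
    simp only [deg, mem_filter] at he
    calc D.card ≤ e.card := card_le_card he.2
      _ = r := hU e he.1
  -- main induction
  have AUX : ∀ i : ℕ, ∀ S ⊆ PS, S.card = i →
      ∃ E : Finset (Finset (Fin n)), E ⊆ K ∧ E.card = i ∧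
        (∀ e ∈ E, ∀ D ∈ PS, D ⊆ e → D ∈ S) ∧
        (∀ e ∈ E, ∃ D ∈ S, D ⊆ e ∧ ∀ v ∈ e, v ∈ PS.sup id → v ∈ D) ∧
        (∀ e ∈ E, ∀ e' ∈ E, e ≠ e' → e ∩ e' = C0) := by
    intro i
    induction i with
    | zero =>
      intro S _ hScard
      exact ⟨∅, empty_subset _, card_empty, by simp, by simp, by simp⟩
    | succ i ih =>
      intro S hSPS hScard
      have hSne : S.Nonempty := card_pos.1 (by omega)
      obtain ⟨D0, hD0S⟩ := hSne
      have hD0PS : D0 ∈ PS := hSPS hD0S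
      set S' := S.erase D0 with hS'
      have hS'sub : S' ⊆ PS := fun x hx => hSPS (erase_subset _ _ hx)
      have hS'card : S'.card = i := by
        rw [hS', card_erase_of_mem hD0S, hScard]
        omega
      obtain ⟨E, hEK, hEcard, hI3, hI4, hI5⟩ := ih S' hS'sub hS'card
      -- the bad set
      set B := PS.sup id ∪ E.sup id with hB
      have hik : i + 1 ≤ k := by
        rw [← hScard, ← hPSk]; exact card_le_card hSPS
      have hBcard : B.card ≤ 2 * k * r := by
        have h1 : (PS.sup id).card ≤ k * r := by
          rw [sup_eq_biUnion]
          calc (PS.biUnion id).card ≤ ∑ D ∈ PS, (id D).card := card_biUnion_le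
            _ ≤ ∑ _D ∈ PS, r := sum_le_sum (fun D hD => by
                simpa using hjr D hD)
            _ = k * r := by rw [sum_const, smul_eq_mul, hPSk]
        have h2 : (E.sup id).card ≤ k * r := by
          rw [sup_eq_biUnion]
          calc (E.biUnion id).card ≤ ∑ e ∈ E, (id e).card := card_biUnion_le
            _ ≤ ∑ _e ∈ E, r := sum_le_sum (fun e he => by
                simp only [id]
                exact le_of_eq (hU e (hEK he)))
            _ = i * r := by rw [sum_const, smul_eq_mul, hEcard]
            _ ≤ k * r := Nat.mul_le_mul_right _ (by omega)
        have h3 : 2 * k * r = k * r + k * r := by ring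
        calc B.card ≤ (PS.sup id).card + (E.sup id).card := card_union_le _ _
          _ ≤ 2 * k * r := by omega
      -- extension for D0
      have hext : ∃ e ∈ K, D0 ⊆ e ∧ e ∩ B ⊆ D0 := by
        apply exists_extension K D0 B Λ
        · intro v hv
          apply hcap
          rw [card_insert_of_notMem hv, hPSj D0 hD0PS]
        · calc B.card * Λ ≤ 2 * k * r * Λ := Nat.mul_le_mul_right _ hBcard
            _ < deg K D0 := hheavy D0 hD0PS
      obtain ⟨e0, he0K, hD0e0, he0B⟩ := hext
      have hPSsupB : PS.sup id ⊆ B := subset_union_left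
      have hEsupB : E.sup id ⊆ B := subset_union_right
      -- e0 ∉ E
      have he0E : e0 ∉ E := by
        intro hmem
        have := hI3 e0 hmem D0 hD0PS hD0e0
        exact (notMem_erase D0 S) this
      refine ⟨insert e0 E, ?_, ?_, ?_, ?_, ?_⟩
      · exact insert_subset he0K hEK
      · rw [card_insert_of_notMem he0E, hEcard]
      · -- I3
        intro e he D hD hDe
        rcases mem_insert.1 he with rfl | heE
        · -- e = e0 : D ⊆ e0 forces D = D0
          have hDsup : D ⊆ PS.sup id := le_sup (f := id) hD
          have hDD0 : D ⊆ D0 := by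
            intro v hv
            exact he0B (mem_inter.2 ⟨hDe hv, hPSsupB (hDsup hv)⟩)
          rw [hnest D hD D0 hD0PS hDD0]
          exact hD0S
        · exact erase_subset _ _ (hI3 e heE D hD hDe)
      · -- I4
        intro e he
        rcases mem_insert.1 he with rfl | heE
        · refine ⟨D0, hD0S, hD0e0, ?_⟩
          intro v hv hvsup
          exact he0B (mem_inter.2 ⟨hv, hPSsupB hvsup⟩)
        · obtain ⟨D, hDS', hDe, hprop⟩ := hI4 e heE
          exact ⟨D, erase_subset _ _ hDS', hDe, hprop⟩
      · -- I5 : pairwise intersections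
        have key : ∀ e ∈ E, e0 ∩ e = C0 := by
          intro e heE
          obtain ⟨De, hDeS', hDee, hprop⟩ := hI4 e heE
          have hDePS : De ∈ PS := hS'sub hDeS'
          have hDeD0 : De ≠ D0 := ne_of_mem_erase hDeS'
          apply Finset.Subset.antisymm
          · intro v hv
            rw [mem_inter] at hv
            have hvB : v ∈ B := hEsupB ((le_sup (f := id) heE) hv.2)
            have hvD0 : v ∈ D0 := he0B (mem_inter.2 ⟨hv.1, hvB⟩)
            have hvDe : v ∈ De := hprop v hv.2 ((le_sup (f := id) hD0PS) hvD0)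
            have : D0 ∩ De = C0 := hpair D0 hD0PS De hDePS (Ne.symm hDeD0)
            rw [← this]
            exact mem_inter.2 ⟨hvD0, hvDe⟩
          · intro v hv
            exact mem_inter.2 ⟨hD0e0 (hPSC D0 hD0PS hv), hDee (hPSC De hDePS hv)⟩
        intro e he e' he' hne
        rcases mem_insert.1 he with rfl | heE
        · rcases mem_insert.1 he' with rfl | he'E
          · exact absurd rfl hne
          · exact key e' he'E
        · rcases mem_insert.1 he' with rfl | he'E
          · rw [inter_comm]; exact key e heE
          · exact hI5 e heE e' he'E hne
  obtain ⟨E, hEK, hEcard, _, hI4, hI5⟩ := AUX k PS Subset.rfl hPSk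
  refine ⟨E, hEK, hEcard, fun e he => hU e (hEK he), C0, hC0, ?_, hI5⟩
  intro e he
  obtain ⟨D, hDS, hDe, _⟩ := hI4 e he
  exact (hPSC D hDS).trans hDe

end SunAux

namespace SunAux

open Finset

variable {n : ℕ}

/-- The heavy `j`-sets (for `j ≥ 2t+1` levels) form an `S(j,t,k)`-free family. -/
lemma heavy_free_high {r t k j Λ : ℕ} (K : Finset (Finset (Fin n)))
    (hU : ∀ e ∈ K, e.card = r) (htj : t < j)
    (hcap : ∀ D : Finset (Fin n), D.card = j + 1 → deg K D ≤ Λ)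
    (hnosun : ∀ P ⊆ K, ¬ IsSunflower r t k P) :
    ∀ P ⊆ (Finset.univ.powersetCard j).filter (fun D => 2 * k * r * Λ < deg K D),
      ¬ IsSunflower j t k P := by
  intro P hP hsun
  obtain ⟨hPcard, hPcards, C0, hC0, hC0sub, hPpair⟩ := hsun
  have hheavy : ∀ D ∈ P, 2 * k * r * Λ < deg K D := by
    intro D hD
    exact (mem_filter.1 (hP hD)).2
  obtain ⟨P', hP'K, hsun'⟩ := greedy K hU htj hcap C0 hC0 P hPcard hPcards hC0sub hPpair hheavy
  exact hnosun P' hP'K hsun'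

/-- For levels `j = 2τ+1+s` with `t = τ+s`, `s ≥ 1` : the `F`-slices of the heavy family
are `S(2τ+1, τ, k)`-free. -/
lemma heavy_free_low {r k τ s Λ : ℕ} (hk : 1 ≤ k) (K : Finset (Finset (Fin n)))
    (hU : ∀ e ∈ K, e.card = r)
    (hcap : ∀ D : Finset (Fin n), D.card = (2 * τ + 1 + s) + 1 → deg K D ≤ Λ)
    (hnosun : ∀ P ⊆ K, ¬ IsSunflower r (τ + s) k P)
    (F : Finset (Fin n)) (hF : F.card = s) :
    ∀ P ⊆ (((Finset.univ.powersetCard (2 * τ + 1 + s)).filter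
        (fun D => 2 * k * r * Λ < deg K D ∧ F ⊆ D)).image (fun D => D \ F)),
      ¬ IsSunflower (2 * τ + 1) τ k P := by
  intro P hP hsun
  obtain ⟨hPcard, hPcards, C', hC', hC'sub, hPpair⟩ := hsun
  -- basic facts about members of P
  have hhP : ∀ S ∈ P, Disjoint S F ∧ (S ∪ F) ∈ (Finset.univ.powersetCard (2 * τ + 1 + s)).filter
      (fun D => 2 * k * r * Λ < deg K D ∧ F ⊆ D) := by
    intro S hS
    obtain ⟨D, hD, hSD⟩ := mem_image.1 (hP hS)
    have hFD : F ⊆ D := (mem_filter.1 hD).2.2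
    have h1 : Disjoint S F := by
      rw [← hSD]; exact sdiff_disjoint
    have h2 : S ∪ F = D := by rw [← hSD, sdiff_union_of_subset hFD]
    rw [h2]
    exact ⟨h1, hD⟩
  -- P is nonempty
  have hPne : P.Nonempty := card_pos.1 (by omega)
  obtain ⟨S0, hS0⟩ := hPne
  have hC'F : Disjoint C' F := disjoint_of_subset_left (hC'sub S0 hS0) (hhP S0 hS0).1
  -- the lifted petals
  set PS := P.image (fun S => S ∪ F) with hPS
  have hinj : ∀ S ∈ P, ∀ S' ∈ P, S ∪ F = S' ∪ F → S = S' := by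
    intro S hS S' hS' h
    have h1 : Disjoint S F := (hhP S hS).1
    have h2 : Disjoint S' F := (hhP S' hS').1
    have : (S ∪ F) \ F = (S' ∪ F) \ F := by rw [h]
    rwa [union_sdiff_right, union_sdiff_right, sdiff_eq_self_of_disjoint h1,
      sdiff_eq_self_of_disjoint h2] at this
  have hPSk : PS.card = k := by
    rw [hPS, card_image_of_injOn (fun S hS S' hS' h => hinj S hS S' hS' h), hPcard]
  have hmemPS : ∀ D ∈ PS, ∃ S ∈ P, S ∪ F = D := by
    intro D hD
    obtain ⟨S, hS, hSD⟩ := mem_image.1 hD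
    exact ⟨S, hS, hSD⟩
  have hPSj : ∀ D ∈ PS, D.card = 2 * τ + 1 + s := by
    intro D hD
    obtain ⟨S, hS, rfl⟩ := hmemPS D hD
    rw [card_union_of_disjoint (hhP S hS).1, hPcards S hS, hF]
  have hC0card : (C' ∪ F).card = τ + s := by
    rw [card_union_of_disjoint hC'F, hC', hF]
  have hPSC : ∀ D ∈ PS, C' ∪ F ⊆ D := by
    intro D hD
    obtain ⟨S, hS, rfl⟩ := hmemPS D hD
    exact union_subset_union (hC'sub S hS) Subset.rfl
  have hPSpair : ∀ D ∈ PS, ∀ D' ∈ PS, D ≠ D' → D ∩ D' = C' ∪ F := by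
    intro D hD D' hD' hne
    obtain ⟨S, hS, rfl⟩ := hmemPS D hD
    obtain ⟨S', hS', rfl⟩ := hmemPS D' hD'
    have hSS' : S ≠ S' := by
      intro h; exact hne (by rw [h])
    have key : S ∩ S' = C' := hPpair S hS S' hS' hSS'
    ext v
    simp only [mem_inter, mem_union]
    constructor
    · rintro ⟨hv1, hv2⟩
      rcases hv1 with hv1 | hv1
      · rcases hv2 with hv2 | hv2
        · left; rw [← key]; exact mem_inter.2 ⟨hv1, hv2⟩
        · right; exact hv2
      · right; exact hv1
    · rintro (hv | hv)
      · rw [← key] at hv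
        rw [mem_inter] at hv
        exact ⟨Or.inl hv.1, Or.inl hv.2⟩
      · exact ⟨Or.inr hv, Or.inr hv⟩
  have hheavy : ∀ D ∈ PS, 2 * k * r * Λ < deg K D := by
    intro D hD
    obtain ⟨S, hS, rfl⟩ := hmemPS D hD
    exact (mem_filter.1 (hhP S hS).2).2.1
  have htj : τ + s < 2 * τ + 1 + s := by omega
  obtain ⟨P', hP'K, hsun'⟩ := greedy K hU htj hcap (C' ∪ F) hC0card PS hPSk hPSj hPSC hPSpair hheavy
  exact hnosun P' hP'K hsun'

/-- Final counting: if all `(t+1)`-degrees are capped and there is no sunflower,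
the family is small. -/
lemma final_bound {r t k Λ : ℕ} (hk : 1 ≤ k) (htr : t < r) (K : Finset (Finset (Fin n)))
    (hU : ∀ e ∈ K, e.card = r)
    (hcap : ∀ D : Finset (Fin n), D.card = t + 1 → deg K D ≤ Λ)
    (hnosun : ∀ P ⊆ K, ¬ IsSunflower r t k P) :
    K.card ≤ n ^ t * (k * r * Λ) := by
  -- per-kernel bound
  have hker : ∀ C : Finset (Fin n), C.card = t → deg K C ≤ k * r * Λ := by
    intro C hC
    -- maximal pairwise-C family
    set Pfam := ((K.filter (fun e => C ⊆ e)).powerset.filter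
      (fun E => ∀ e ∈ E, ∀ e' ∈ E, e ≠ e' → e ∩ e' = C)) with hPfam
    have hne : Pfam.Nonempty := ⟨∅, by simp [hPfam]⟩
    obtain ⟨Em, hEm, hEmax⟩ := exists_max_image Pfam (fun E => E.card) hne
    have hEmsub : Em ⊆ K.filter (fun e => C ⊆ e) := mem_powerset.1 (mem_filter.1 hEm).1
    have hEmpair : ∀ e ∈ Em, ∀ e' ∈ Em, e ≠ e' → e ∩ e' = C := (mem_filter.1 hEm).2
    -- |Em| < k
    have hEmcard : Em.card < k := by
      by_contra h
      push_neg at h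
      obtain ⟨P', hP'Em, hP'card⟩ := exists_subset_card_eq h
      have hP'K : P' ⊆ K := fun e he => (mem_filter.1 (hEmsub (hP'Em he))).1
      refine hnosun P' hP'K ⟨hP'card, fun e he => hU e (hP'K he), C, hC, ?_, ?_⟩
      · exact fun e he => (mem_filter.1 (hEmsub (hP'Em he))).2
      · exact fun e he e' he' hne' => hEmpair e (hP'Em he) e' (hP'Em he') hne'
    set X := Em.sup id with hX
    have hXcard : X.card ≤ k * r := by
      rw [hX, sup_eq_biUnion]
      calc (Em.biUnion id).card ≤ ∑ e ∈ Em, (id e).card := card_biUnion_le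
        _ ≤ ∑ _e ∈ Em, r := sum_le_sum (fun e he => by
            simp only [id]
            exact le_of_eq (hU e (mem_filter.1 (hEmsub he)).1))
        _ = Em.card * r := by rw [sum_const, smul_eq_mul]
        _ ≤ k * r := Nat.mul_le_mul_right _ (le_of_lt hEmcard)
    -- coverage
    have hcover : K.filter (fun e => C ⊆ e) ⊆
        (X \ C).biUnion (fun w => K.filter (fun e => insert w C ⊆ e)) := by
      intro e he
      have heK := (mem_filter.1 he).1
      have heC := (mem_filter.1 he).2
      have hwit : ∃ v, v ∈ e ∧ v ∈ X ∧ v ∉ C := by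
        by_cases heEm : e ∈ Em
        · have h1 : ¬ (e ⊆ C) := by
            intro h
            have := card_le_card h
            rw [hU e heK, hC] at this
            omega
          obtain ⟨v, hv1, hv2⟩ := not_subset.1 h1
          exact ⟨v, hv1, (le_sup (f := id) heEm) hv1, hv2⟩
        · -- e ∉ Em : maximality gives a violating pair
          have h1 : ¬ (∀ e' ∈ Em, e ≠ e' → e ∩ e' = C) := by
            intro hall
            have hins : insert e Em ∈ Pfam := by
              rw [hPfam, mem_filter, mem_powerset]
              refine ⟨insert_subset he hEmsub, ?_⟩
              intro a ha b hb hab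
              rcases mem_insert.1 ha with rfl | haEm
              · rcases mem_insert.1 hb with rfl | hbEm
                · exact absurd rfl hab
                · exact hall b hbEm hab
              · rcases mem_insert.1 hb with rfl | hbEm
                · rw [inter_comm]
                  exact hall a haEm (Ne.symm hab)
                · exact hEmpair a haEm b hbEm hab
            have := hEmax _ hins
            rw [card_insert_of_notMem heEm] at this
            omega
          push_neg at h1
          obtain ⟨e', he'Em, hne', hneq⟩ := h1
          have hCsub : C ⊆ e ∩ e' :=
            subset_inter heC (mem_filter.1 (hEmsub he'Em)).2
          have : ¬ (e ∩ e' ⊆ C) := by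
            intro h
            exact hneq (Subset.antisymm h hCsub)
          obtain ⟨v, hv1, hv2⟩ := not_subset.1 this
          rw [mem_inter] at hv1
          exact ⟨v, hv1.1, (le_sup (f := id) he'Em) hv1.2, hv2⟩
      obtain ⟨v, hv1, hv2, hv3⟩ := hwit
      exact mem_biUnion.2 ⟨v, mem_sdiff.2 ⟨hv2, hv3⟩,
        mem_filter.2 ⟨heK, insert_subset hv1 heC⟩⟩
    calc deg K C ≤ ((X \ C).biUnion (fun w => K.filter (fun e => insert w C ⊆ e))).card :=
          card_le_card hcover
      _ ≤ ∑ w ∈ X \ C, deg K (insert w C) := card_biUnion_le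
      _ ≤ ∑ _w ∈ X \ C, Λ := sum_le_sum (fun w hw => hcap _ (by
            rw [card_insert_of_notMem (mem_sdiff.1 hw).2, hC]))
      _ = (X \ C).card * Λ := by rw [sum_const, smul_eq_mul]
      _ ≤ (k * r) * Λ := Nat.mul_le_mul_right _ (le_trans (card_le_card sdiff_subset) hXcard)
  -- cover K by kernels
  have hKsub : K ⊆ (Finset.univ.powersetCard t).biUnion (fun C => K.filter (fun e => C ⊆ e)) := by
    intro e he
    have h1 : t ≤ e.card := by rw [hU e he]; omega
    obtain ⟨C, hCe, hCcard⟩ := exists_subset_card_eq h1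
    exact mem_biUnion.2 ⟨C, mem_powersetCard.2 ⟨subset_univ _, hCcard⟩,
      mem_filter.2 ⟨he, hCe⟩⟩
  calc K.card ≤ _ := card_le_card hKsub
    _ ≤ ∑ C ∈ Finset.univ.powersetCard t, deg K C := card_biUnion_le
    _ ≤ ∑ _C ∈ Finset.univ.powersetCard t, (k * r * Λ) := by
        refine sum_le_sum (fun C hC => hker C ?_)
        exact (mem_powersetCard.1 hC).2
    _ = (Finset.univ.powersetCard t).card * (k * r * Λ) := by rw [sum_const, smul_eq_mul]
    _ ≤ n ^ t * (k * r * Λ) := by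
        refine Nat.mul_le_mul_right _ ?_
        rw [card_powersetCard, card_univ, Fintype.card_fin]
        exact Nat.choose_le_pow _ _

end SunAux

namespace SunAux

open Finset

variable {n : ℕ}

/-- threshold at level `j` -/
def Th (r k j : ℕ) : ℕ := (2 * k * r + 2) ^ (r - j)

/-- heavy `j`-sets of `K` -/
def hvy (r k : ℕ) (K : Finset (Finset (Fin n))) (j : ℕ) : Finset (Finset (Fin n)) :=
  (Finset.univ.powersetCard j).filter (fun D => Th r k j < deg K D)

/-- prune edges containing a heavy `j`-set -/
def prune (r k : ℕ) (K : Finset (Finset (Fin n))) (j : ℕ) : Finset (Finset (Fin n)) :=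
  K.filter (fun e => ∀ D ∈ hvy r k K j, ¬ D ⊆ e)

/-- iterated pruning, level `r-1` first -/
def Rres (r k : ℕ) (H : Finset (Finset (Fin n))) : ℕ → Finset (Finset (Fin n))
  | 0 => H
  | (m+1) => prune r k (Rres r k H m) (r - 1 - m)

lemma Th_one {r k : ℕ} : Th r k r = 1 := by simp [Th]

lemma Th_succ {r k j : ℕ} (hj : j < r) : Th r k j = (2 * k * r + 2) * Th r k (j + 1) := by
  rw [Th, Th]
  have h1 : r - j = (r - (j + 1)) + 1 := by omega
  rw [h1, pow_succ]
  ring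

lemma Th_pos {r k j : ℕ} : 0 < Th r k j := Nat.pow_pos (by omega)

lemma prune_subset {r k j : ℕ} (K : Finset (Finset (Fin n))) : prune r k K j ⊆ K :=
  filter_subset _ _

lemma Rres_subset {r k : ℕ} (H : Finset (Finset (Fin n))) (m : ℕ) : Rres r k H m ⊆ H := by
  induction m with
  | zero => exact Subset.rfl
  | succ m ih => exact (prune_subset _).trans ih

lemma prune_cap {r k j : ℕ} (K : Finset (Finset (Fin n))) (D : Finset (Fin n))
    (hD : D.card = j) : deg (prune r k K j) D ≤ Th r k j := by
  by_contra hcon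
  push_neg at hcon
  have h1 : 0 < deg (prune r k K j) D := lt_of_le_of_lt (Nat.zero_le _) hcon
  obtain ⟨e, he⟩ := card_pos.1 h1
  simp only [deg, mem_filter] at he
  have he1 : e ∈ prune r k K j := he.1
  have he2 : D ⊆ e := he.2
  have hDh : D ∈ hvy r k K j := by
    refine mem_filter.2 ⟨mem_powersetCard.2 ⟨subset_univ _, hD⟩, ?_⟩
    calc Th r k j < deg (prune r k K j) D := hcon
      _ ≤ deg K D := deg_mono (prune_subset _) D
  exact (mem_filter.1 he1).2 D hDh he2

/-- the master cap invariant -/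
lemma Rres_cap {r k : ℕ} (H : Finset (Finset (Fin n))) (hU : ∀ e ∈ H, e.card = r) :
    ∀ m, ∀ D : Finset (Fin n), r - 1 - m < D.card → D.card ≤ r →
      deg (Rres r k H m) D ≤ Th r k D.card := by
  intro m
  induction m with
  | zero =>
    intro D h1 h2
    have h3 : D.card = r := by omega
    rw [h3, Th_one]
    exact deg_top H hU D (le_of_eq h3.symm)
  | succ m ih =>
    intro D h1 h2
    by_cases h3 : r - 1 - m < D.card
    · calc deg (Rres r k H (m+1)) D ≤ deg (Rres r k H m) D :=
            deg_mono (prune_subset _) D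
        _ ≤ Th r k D.card := ih D h3 h2
    · have h4 : D.card = r - 1 - m := by omega
      rw [h4]
      exact prune_cap _ D h4

lemma Rres_unif {r k : ℕ} (H : Finset (Finset (Fin n))) (hU : ∀ e ∈ H, e.card = r) (m : ℕ) :
    ∀ e ∈ Rres r k H m, e.card = r := fun e he => hU e (Rres_subset H m he)

/-- one pruning step loses at most `|hvy| * (n * Th (j+1))` edges -/
lemma prune_card_le {r k j : ℕ} (K : Finset (Finset (Fin n))) (hU : ∀ e ∈ K, e.card = r)
    (hjr : j < r)
    (hcap : ∀ D : Finset (Fin n), D.card = j + 1 → deg K D ≤ Th r k (j + 1)) :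
    K.card ≤ (prune r k K j).card + (hvy r k K j).card * (n * Th r k (j + 1)) := by
  have hpart := card_filter_add_card_filter_not
    (s := K) (p := fun e => ∀ D ∈ hvy r k K j, ¬ D ⊆ e)
  have hrem : (K.filter (fun e => ¬ ∀ D ∈ hvy r k K j, ¬ D ⊆ e)) ⊆
      (hvy r k K j).biUnion (fun D => K.filter (fun e => D ⊆ e)) := by
    intro e he
    rw [mem_filter] at he
    push_neg at he
    obtain ⟨D, hD1, hD2⟩ := he.2
    exact mem_biUnion.2 ⟨D, hD1, mem_filter.2 ⟨he.1, hD2⟩⟩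
  have h2 : (K.filter (fun e => ¬ ∀ D ∈ hvy r k K j, ¬ D ⊆ e)).card ≤
      (hvy r k K j).card * (n * Th r k (j + 1)) := by
    calc _ ≤ _ := card_le_card hrem
      _ ≤ ∑ D ∈ hvy r k K j, deg K D := card_biUnion_le
      _ ≤ ∑ _D ∈ hvy r k K j, n * Th r k (j + 1) := by
          refine sum_le_sum (fun D hD => ?_)
          have hDcard : D.card = j := (mem_powersetCard.1 (mem_filter.1 hD).1).2
          refine deg_le_children K hU D (by omega) _ (fun x hx => ?_)
          exact hcap _ (by rw [card_insert_of_notMem hx, hDcard])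
      _ = (hvy r k K j).card * (n * Th r k (j + 1)) := by rw [sum_const, smul_eq_mul]
  have h3 : (prune r k K j).card + (K.filter (fun e => ¬ ∀ D ∈ hvy r k K j, ¬ D ⊆ e)).card
      = K.card := hpart
  omega

end SunAux

namespace SunAux

open Finset

variable {n : ℕ}

/-- counting heavy sets at high levels `j ≥ 2t+1` -/
lemma hvy_count_high {r t k j : ℕ} (H : Finset (Finset (Fin n))) (hU : ∀ e ∈ H, e.card = r)
    (m : ℕ) (hj : j = r - 1 - m) (hj1 : 2 * t + 1 ≤ j) (hj2 : j < r)
    (hfree : ∀ P ⊆ H, ¬ IsSunflower r t k P)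
    (CIjt : ℕ)
    (hCIjt : ∀ (G : Finset (Finset (Fin n))), (∀ e ∈ G, e.card = j) →
        (∀ P ⊆ G, ¬ IsSunflower j t k P) → G.card ≤ CIjt * n ^ (j - t - 1) * k ^ (t + 1)) :
    (hvy r k (Rres r k H m) j).card ≤ CIjt * n ^ (j - t - 1) * k ^ (t + 1) := by
  set K := Rres r k H m with hK
  have hUK : ∀ e ∈ K, e.card = r := Rres_unif H hU m
  have hnosun : ∀ P ⊆ K, ¬ IsSunflower r t k P :=
    fun P hP => hfree P (hP.trans (Rres_subset H m))
  have hcap : ∀ D : Finset (Fin n), D.card = j + 1 → deg K D ≤ Th r k (j + 1) := by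
    intro D hD
    refine Rres_cap H hU m D ?_ ?_ |>.trans_eq (by rw [hD])
    · omega
    · -- j + 1 ≤ r
      omega
  -- the heavy family is contained in the `2krΛ` family
  have hsub : hvy r k K j ⊆ (Finset.univ.powersetCard j).filter
      (fun D => 2 * k * r * Th r k (j + 1) < deg K D) := by
    intro D hD
    rw [hvy, mem_filter] at hD
    rw [mem_filter]
    refine ⟨hD.1, ?_⟩
    have h1 : Th r k j = (2 * k * r + 2) * Th r k (j + 1) := Th_succ hj2
    have h2 := Th_pos (r := r) (k := k) (j := j + 1)
    calc 2 * k * r * Th r k (j + 1) < (2 * k * r + 2) * Th r k (j + 1) :=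
          (Nat.mul_lt_mul_right h2).2 (by omega)
      _ = Th r k j := h1.symm
      _ ≤ deg K D := le_of_lt hD.2
  have hfree2 := heavy_free_high (Λ := Th r k (j + 1)) K hUK (by omega) hcap hnosun
  calc (hvy r k K j).card ≤ _ := card_le_card hsub
    _ ≤ CIjt * n ^ (j - t - 1) * k ^ (t + 1) := by
        refine hCIjt _ (fun D hD => (mem_powersetCard.1 (mem_filter.1 hD).1).2) ?_
        exact hfree2

/-- counting heavy sets at low levels `t+1 ≤ j ≤ 2t`, written as `j = 2τ+1+s`, `t = τ+s` -/
lemma hvy_count_low {r t k j τ s : ℕ} (hk : 1 ≤ k)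
    (H : Finset (Finset (Fin n))) (hU : ∀ e ∈ H, e.card = r)
    (m : ℕ) (hj : j = r - 1 - m) (hts : t = τ + s) (hjts : j = 2 * τ + 1 + s)
    (hs : 1 ≤ s) (hj2 : j < r)
    (hfree : ∀ P ⊆ H, ¬ IsSunflower r t k P)
    (CIlow : ℕ)
    (hCIlow : ∀ (G : Finset (Finset (Fin n))), (∀ e ∈ G, e.card = 2 * τ + 1) →
        (∀ P ⊆ G, ¬ IsSunflower (2 * τ + 1) τ k P) →
        G.card ≤ CIlow * n ^ τ * k ^ (τ + 1)) :
    (hvy r k (Rres r k H m) j).card ≤ n ^ s * (CIlow * n ^ τ * k ^ (τ + 1)) := by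
  set K := Rres r k H m with hK
  have hUK : ∀ e ∈ K, e.card = r := Rres_unif H hU m
  have hnosun : ∀ P ⊆ K, ¬ IsSunflower r (τ + s) k P := by
    intro P hP
    rw [← hts]
    exact hfree P (hP.trans (Rres_subset H m))
  have hcap : ∀ D : Finset (Fin n), D.card = (2 * τ + 1 + s) + 1 → deg K D ≤ Th r k (j + 1) := by
    intro D hD
    have hD' : D.card = j + 1 := by omega
    refine (Rres_cap H hU m D (by omega) (by omega)).trans_eq (by rw [hD'])
  set Λ := Th r k (j + 1) with hΛ
  -- big filtered families per F
  set fam : Finset (Fin n) → Finset (Finset (Fin n)) := fun F =>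
    (Finset.univ.powersetCard (2 * τ + 1 + s)).filter
      (fun D => 2 * k * r * Λ < deg K D ∧ F ⊆ D) with hfam
  -- cover of hvy
  have hcover : hvy r k K j ⊆ (Finset.univ.powersetCard s).biUnion fam := by
    intro D hD
    rw [hvy, mem_filter] at hD
    have hDcard : D.card = j := (mem_powersetCard.1 hD.1).2
    have hheavy : 2 * k * r * Λ < deg K D := by
      have h1 : Th r k j = (2 * k * r + 2) * Λ := Th_succ hj2
      have h2 := Th_pos (r := r) (k := k) (j := j + 1)
      calc 2 * k * r * Λ < (2 * k * r + 2) * Λ :=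
            (Nat.mul_lt_mul_right (by rw [hΛ]; exact h2)).2 (by omega)
        _ = Th r k j := h1.symm
        _ ≤ deg K D := le_of_lt hD.2
    have hsD : s ≤ D.card := by omega
    obtain ⟨F, hFD, hFcard⟩ := exists_subset_card_eq hsD
    refine mem_biUnion.2 ⟨F, mem_powersetCard.2 ⟨subset_univ _, hFcard⟩, ?_⟩
    rw [hfam]
    exact mem_filter.2 ⟨mem_powersetCard.2 ⟨subset_univ _, by omega⟩, hheavy, hFD⟩
  -- each fam F is as large as its sliced image, which is sunflower-free
  have hper : ∀ F ∈ Finset.univ.powersetCard s, (fam F).card ≤ CIlow * n ^ τ * k ^ (τ + 1) := by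
    intro F hF
    have hFcard : F.card = s := (mem_powersetCard.1 hF).2
    have hfreelow := heavy_free_low (τ := τ) (s := s) (Λ := Λ) hk K hUK hcap hnosun F hFcard
    have himg : ((fam F).image (fun D => D \ F)).card = (fam F).card := by
      refine card_image_of_injOn ?_
      intro D hD D' hD' hDD'
      rw [Finset.mem_coe, hfam, mem_filter] at hD hD'
      have h1 : F ⊆ D := hD.2.2
      have h2 : F ⊆ D' := hD'.2.2
      simp only at hDD'
      have h3 : D \ F ∪ F = D' \ F ∪ F := by rw [hDD']
      rwa [sdiff_union_of_subset h1, sdiff_union_of_subset h2] at h3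
    rw [← himg]
    refine hCIlow _ ?_ hfreelow
    · intro S hS
      obtain ⟨D, hD, rfl⟩ := mem_image.1 hS
      have h1 : F ⊆ D := (mem_filter.1 hD).2.2
      have h2 : D.card = 2 * τ + 1 + s := (mem_powersetCard.1 (mem_filter.1 hD).1).2
      rw [card_sdiff_of_subset h1, h2, hFcard]
      omega
  calc (hvy r k K j).card ≤ ((Finset.univ.powersetCard s).biUnion fam).card :=
        card_le_card hcover
    _ ≤ ∑ F ∈ Finset.univ.powersetCard s, (fam F).card := card_biUnion_le
    _ ≤ ∑ _F ∈ Finset.univ.powersetCard s, (CIlow * n ^ τ * k ^ (τ + 1)) :=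
        sum_le_sum hper
    _ = (Finset.univ.powersetCard s).card * (CIlow * n ^ τ * k ^ (τ + 1)) := by
        rw [sum_const, smul_eq_mul]
    _ ≤ n ^ s * (CIlow * n ^ τ * k ^ (τ + 1)) := by
        refine Nat.mul_le_mul_right _ ?_
        rw [card_powersetCard, card_univ, Fintype.card_fin]
        exact Nat.choose_le_pow _ _

/-- telescoping the pruning -/
lemma telescope {r k : ℕ} (H : Finset (Finset (Fin n))) (hU : ∀ e ∈ H, e.card = r) :
    ∀ mm, mm ≤ r - 1 →
      H.card ≤ (∑ m ∈ Finset.range mm,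
          (hvy r k (Rres r k H m) (r - 1 - m)).card * (n * Th r k (r - 1 - m + 1)))
        + (Rres r k H mm).card := by
  intro mm
  induction mm with
  | zero => simp [Rres]
  | succ mm ih =>
    intro hmm
    have h1 := ih (by omega)
    have hstep : (Rres r k H mm).card ≤ (Rres r k H (mm + 1)).card +
        (hvy r k (Rres r k H mm) (r - 1 - mm)).card * (n * Th r k (r - 1 - mm + 1)) := by
      refine prune_card_le (Rres r k H mm) (Rres_unif H hU mm) (by omega) ?_
      intro D hD
      refine (Rres_cap H hU mm D (by omega) (by omega)).trans_eq (by rw [hD])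
    rw [sum_range_succ]
    omega

end SunAux

namespace SunAux

open Finset

variable {n : ℕ}

/-- the final constant -/
def CC (r t : ℕ) (CI : ℕ → ℕ → ℕ) : ℕ :=
  (4 * r + 4) ^ (r + 1) *
    ((r + 1) * ((Finset.range (r + 1)).sum
        fun j => CI j t + CI (2 * (j - t - 1) + 1) (j - t - 1) + 1) + r + 1)

lemma Th_le {r k a : ℕ} (hk : 1 ≤ k) (ha : a ≤ r + 1) :
    (2 * k * r + 2) ^ a ≤ (4 * r + 4) ^ (r + 1) * k ^ a := by
  have h1 : 2 * k * r + 2 ≤ (4 * r + 4) * k := by nlinarith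
  calc (2 * k * r + 2) ^ a ≤ ((4 * r + 4) * k) ^ a := Nat.pow_le_pow_left h1 a
    _ = (4 * r + 4) ^ a * k ^ a := mul_pow _ _ _
    _ ≤ (4 * r + 4) ^ (r + 1) * k ^ a := by
        refine Nat.mul_le_mul_right _ ?_
        exact Nat.pow_le_pow_right (by omega) ha

lemma main_bound {r t k : ℕ} (hk : 1 ≤ k) (htr : 2 * t + 2 ≤ r) (hkn : k ≤ n)
    (H : Finset (Finset (Fin n))) (hU : ∀ e ∈ H, e.card = r)
    (hfree : ∀ P ⊆ H, ¬ IsSunflower r t k P)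
    (CI : ℕ → ℕ → ℕ)
    (hCI : ∀ ρ τ : ℕ, ρ < r → τ < ρ → 2 * τ + 1 ≤ ρ →
      ∀ (G : Finset (Finset (Fin n))), (∀ e ∈ G, e.card = ρ) →
        (∀ P ⊆ G, ¬ IsSunflower ρ τ k P) →
        G.card ≤ CI ρ τ * n ^ (ρ - τ - 1) * k ^ (τ + 1)) :
    H.card ≤ CC r t CI * (n ^ (r - t - 1) * k ^ (t + 1)) := by
  set X := n ^ (r - t - 1) * k ^ (t + 1) with hX
  set S := (Finset.range (r + 1)).sum
      (fun j => CI j t + CI (2 * (j - t - 1) + 1) (j - t - 1) + 1) with hS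
  set B := (4 * r + 4) ^ (r + 1) with hB
  -- per-stage bound
  have hstage : ∀ m ∈ Finset.range (r - t - 1),
      (hvy r k (Rres r k H m) (r - 1 - m)).card * (n * Th r k (r - 1 - m + 1)) ≤
        (CI (r-1-m) t + CI (2 * ((r-1-m) - t - 1) + 1) ((r-1-m) - t - 1) + 1) * (B * X) := by
    intro m hm
    rw [mem_range] at hm
    set j := r - 1 - m with hjdef
    have hj1 : t + 1 ≤ j := by omega
    have hj2 : j < r := by omega
    have hThle : Th r k (j + 1) ≤ B * k ^ (r - j - 1) := by
      rw [Th]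
      have : r - (j + 1) = r - j - 1 := by omega
      rw [this]
      exact Th_le hk (by omega)
    by_cases hcase : 2 * t + 1 ≤ j
    · -- high levels
      have hcnt := hvy_count_high (t := t) H hU m rfl hcase hj2 hfree (CI j t)
        (hCI j t hj2 (by omega) hcase)
      calc (hvy r k (Rres r k H m) j).card * (n * Th r k (j + 1))
          ≤ (CI j t * n ^ (j - t - 1) * k ^ (t + 1)) * (n * (B * k ^ (r - j - 1))) := by
            refine Nat.mul_le_mul hcnt ?_
            exact Nat.mul_le_mul_left _ hThle
        _ = CI j t * B * ((n ^ (j - t - 1) * n * k ^ (r - j - 1)) * k ^ (t + 1)) := by ring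
        _ ≤ CI j t * B * ((n ^ (j - t - 1) * n * n ^ (r - j - 1)) * k ^ (t + 1)) := by
            refine Nat.mul_le_mul_left _ (Nat.mul_le_mul_right _ ?_)
            exact Nat.mul_le_mul_left _ (Nat.pow_le_pow_left hkn _)
        _ = CI j t * (B * X) := by
            have hnpow : n ^ (j - t - 1) * n * n ^ (r - j - 1) = n ^ (r - t - 1) := by
              rw [← pow_succ, ← pow_add]
              congr 1
              omega
            rw [hnpow, hX]
            ring
        _ ≤ (CI j t + CI (2 * (j - t - 1) + 1) (j - t - 1) + 1) * (B * X) :=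
            Nat.mul_le_mul_right _ (by omega)
    · -- low levels
      set τ := j - t - 1 with hτ
      set s := t - τ with hs
      have hts : t = τ + s := by omega
      have hjts : j = 2 * τ + 1 + s := by omega
      have hs1 : 1 ≤ s := by omega
      have hcnt := hvy_count_low (t := t) hk H hU m rfl hts hjts hs1 hj2 hfree
        (CI (2 * τ + 1) τ) ?_
      swap
      · intro G hGu hGfree
        have := hCI (2 * τ + 1) τ (by omega) (by omega) (by omega) G hGu hGfree
        have h5 : 2 * τ + 1 - τ - 1 = τ := by omega
        rwa [h5] at this
      calc (hvy r k (Rres r k H m) j).card * (n * Th r k (j + 1))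
          ≤ (n ^ s * (CI (2 * τ + 1) τ * n ^ τ * k ^ (τ + 1))) * (n * (B * k ^ (r - j - 1))) := by
            refine Nat.mul_le_mul hcnt ?_
            exact Nat.mul_le_mul_left _ hThle
        _ = CI (2 * τ + 1) τ * B * ((n ^ s * n ^ τ * n) * (k ^ (τ + 1) * k ^ (r - j - 1))) := by
            ring
        _ = CI (2 * τ + 1) τ * B * (n ^ (t + 1) * (k ^ (t + 1) * k ^ (r - 2 * t - 2))) := by
            have h6 : n ^ s * n ^ τ * n = n ^ (t + 1) := by
              rw [← pow_add, ← pow_succ]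
              congr 1
              omega
            have h7 : k ^ (τ + 1) * k ^ (r - j - 1) = k ^ (t + 1) * k ^ (r - 2 * t - 2) := by
              rw [← pow_add, ← pow_add]
              congr 1
              omega
            rw [h6, h7]
        _ ≤ CI (2 * τ + 1) τ * B * (n ^ (t + 1) * (k ^ (t + 1) * n ^ (r - 2 * t - 2))) := by
            refine Nat.mul_le_mul_left _ (Nat.mul_le_mul_left _ (Nat.mul_le_mul_left _ ?_))
            exact Nat.pow_le_pow_left hkn _
        _ = CI (2 * τ + 1) τ * (B * X) := by
            have h8 : n ^ (t + 1) * n ^ (r - 2 * t - 2) = n ^ (r - t - 1) := by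
              rw [← pow_add]
              congr 1
              omega
            rw [hX, ← h8]
            ring
        _ ≤ (CI j t + CI (2 * (j - t - 1) + 1) (j - t - 1) + 1) * (B * X) := by
            rw [hτ]
            exact Nat.mul_le_mul_right _ (by omega)
  -- telescoping
  have htel := telescope (r := r) (k := k) H hU (r - t - 1) (by omega)
  -- final residual bound
  have hfinal : (Rres r k H (r - t - 1)).card ≤ (r + 1) * (B * X) := by
    have hcapfin : ∀ D : Finset (Fin n), D.card = t + 1 →
        deg (Rres r k H (r - t - 1)) D ≤ Th r k (t + 1) := by
      intro D hD
      refine (Rres_cap H hU (r - t - 1) D (by omega) (by omega)).trans_eq (by rw [hD])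
    have h9 := final_bound hk (by omega) (Rres r k H (r - t - 1))
      (Rres_unif H hU _)
      hcapfin
      (fun P hP => hfree P (hP.trans (Rres_subset H _)))
    have hThle2 : Th r k (t + 1) ≤ B * k ^ (r - t - 1) := by
      rw [Th]
      have : r - (t + 1) = r - t - 1 := by omega
      rw [this]
      exact Th_le hk (by omega)
    calc (Rres r k H (r - t - 1)).card ≤ n ^ t * (k * r * Th r k (t + 1)) := h9
      _ ≤ n ^ t * (k * r * (B * k ^ (r - t - 1))) := by
          refine Nat.mul_le_mul_left _ (Nat.mul_le_mul_left _ hThle2)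
      _ = r * B * (n ^ t * (k * k ^ (r - t - 1))) := by ring
      _ = r * B * (n ^ t * (k ^ (t + 1) * k ^ (r - 2 * t - 1))) := by
          have h10 : k * k ^ (r - t - 1) = k ^ (t + 1) * k ^ (r - 2 * t - 1) := by
            rw [← pow_succ', ← pow_add]
            congr 1
            omega
          rw [h10]
      _ ≤ r * B * (n ^ t * (k ^ (t + 1) * n ^ (r - 2 * t - 1))) := by
          refine Nat.mul_le_mul_left _ (Nat.mul_le_mul_left _ (Nat.mul_le_mul_left _ ?_))
          exact Nat.pow_le_pow_left hkn _
      _ = r * (B * X) := by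
          have h11 : n ^ t * n ^ (r - 2 * t - 1) = n ^ (r - t - 1) := by
            rw [← pow_add]
            congr 1
            omega
          rw [hX, ← h11]
          ring
      _ ≤ (r + 1) * (B * X) := Nat.mul_le_mul_right _ (by omega)
  -- sum the stages
  have hsum : (∑ m ∈ Finset.range (r - t - 1),
      (hvy r k (Rres r k H m) (r - 1 - m)).card * (n * Th r k (r - 1 - m + 1))) ≤
      (r + 1) * S * (B * X) := by
    calc _ ≤ ∑ m ∈ Finset.range (r - t - 1),
          (CI (r-1-m) t + CI (2 * ((r-1-m) - t - 1) + 1) ((r-1-m) - t - 1) + 1) * (B * X) :=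
          sum_le_sum hstage
      _ ≤ ∑ _m ∈ Finset.range (r - t - 1), S * (B * X) := by
          refine sum_le_sum (fun m hm => Nat.mul_le_mul_right _ ?_)
          rw [mem_range] at hm
          refine single_le_sum (f := fun j => CI j t + CI (2 * (j - t - 1) + 1) (j - t - 1) + 1)
            (fun i _ => Nat.zero_le _) ?_
          rw [mem_range]
          omega
      _ = (r - t - 1) * (S * (B * X)) := by rw [sum_const, smul_eq_mul, card_range]
      _ ≤ (r + 1) * S * (B * X) := by
          rw [mul_assoc]
          exact Nat.mul_le_mul_right _ (by omega)
  calc H.card ≤ _ := htel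
    _ ≤ (r + 1) * S * (B * X) + (r + 1) * (B * X) := by omega
    _ = B * (((r + 1) * S + r + 1) * X) := by ring
    _ = CC r t CI * X := by rw [CC, hB, hS]; ring

end SunAux

theorem stmt18 (r t : ℕ) (htr : 2 * t + 1 ≤ r)
    (hbal : ∀ t' : ℕ, t' ≤ t → ∃ C : ℕ, 0 < C ∧
      ∀ (n k : ℕ) (H : Finset (Finset (Fin n))),
        (∀ e ∈ H, e.card = 2 * t' + 1) →
        (∀ P ⊆ H, ¬ IsSunflower (2 * t' + 1) t' k P) →
        H.card ≤ C * n ^ t' * k ^ (t' + 1))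
    (hind : ∀ r' t' : ℕ, r' < r → t' < r' → ∃ C : ℕ, 0 < C ∧
      ∀ (n k : ℕ) (H : Finset (Finset (Fin n))),
        (∀ e ∈ H, e.card = r') →
        (∀ P ⊆ H, ¬ IsSunflower r' t' k P) →
        H.card ≤ if 2 * t' + 1 ≤ r' then C * n ^ (r' - t' - 1) * k ^ (t' + 1)
          else C * n ^ t' * k ^ (r' - t')) :
    ∃ C : ℕ, 0 < C ∧ ∀ (n k : ℕ) (H : Finset (Finset (Fin n))), k ≤ n →
      (∀ e ∈ H, e.card = r) →
      C * n ^ (r - t - 1) * k ^ (t + 1) < H.card →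
      ∃ P ⊆ H, IsSunflower r t k P := by
  classical
  obtain ⟨CB, hCBpos, hCB⟩ := hbal t le_rfl
  choose CIfun hCIpos hCIspec using hind
  set CI : ℕ → ℕ → ℕ := fun ρ τ => if h : ρ < r ∧ τ < ρ then CIfun ρ τ h.1 h.2 else 1 with hCIdef
  refine ⟨SunAux.CC r t CI + CB + 1, by omega, ?_⟩
  intro n k H hkn hunif hbig
  by_contra hcon
  push_neg at hcon
  rcases Nat.eq_zero_or_pos k with rfl | hk
  · -- k = 0 : the empty sunflower exists
    have h0 : (0 : ℕ) ^ (t + 1) = 0 := zero_pow (by omega)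
    rw [h0, mul_zero] at hbig
    have hH : H.Nonempty := Finset.card_pos.1 hbig
    obtain ⟨e, he⟩ := hH
    have hte : t ≤ e.card := by rw [hunif e he]; omega
    obtain ⟨C0, _, hC0card⟩ := Finset.exists_subset_card_eq hte
    refine hcon ∅ (Finset.empty_subset H) ⟨Finset.card_empty, by simp, C0, hC0card, by simp, by simp⟩
  · rcases (by omega : r = 2 * t + 1 ∨ 2 * t + 2 ≤ r) with hreq | hreq
    · -- balanced case : direct application of hbal
      subst hreq
      have hexp : 2 * t + 1 - t - 1 = t := by omega
      rw [hexp] at hbig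
      have hq := hCB n k H hunif hcon
      have h2 : CB * n ^ t * k ^ (t + 1) ≤
          (SunAux.CC (2 * t + 1) t CI + CB + 1) * n ^ t * k ^ (t + 1) :=
        Nat.mul_le_mul_right _ (Nat.mul_le_mul_right _ (by omega))
      omega
    · -- main case
      have hCI' : ∀ ρ τ : ℕ, ρ < r → τ < ρ → 2 * τ + 1 ≤ ρ →
          ∀ (G : Finset (Finset (Fin n))), (∀ e ∈ G, e.card = ρ) →
            (∀ P ⊆ G, ¬ IsSunflower ρ τ k P) →
            G.card ≤ CI ρ τ * n ^ (ρ - τ - 1) * k ^ (τ + 1) := by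
        intro ρ τ h1 h2 h3 G hGu hGf
        have hsp := hCIspec ρ τ h1 h2 n k G hGu hGf
        rw [if_pos h3] at hsp
        have hCIeq : CI ρ τ = CIfun ρ τ h1 h2 := by
          rw [hCIdef]
          exact dif_pos ⟨h1, h2⟩
        rw [hCIeq]
        exact hsp
      have hmb := SunAux.main_bound hk hreq hkn H hunif hcon CI hCI'
      have h2 : SunAux.CC r t CI * (n ^ (r - t - 1) * k ^ (t + 1)) ≤
          (SunAux.CC r t CI + CB + 1) * (n ^ (r - t - 1) * k ^ (t + 1)) :=
        Nat.mul_le_mul_right _ (by omega)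
      rw [mul_assoc] at hbig
      omega
end
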